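/- arXiv:1011.2388 — 3 statements merged into one kernel-verified Lean document; each statement's English description precedes it below -/
import Mathlib

section
/- Let c > 0 and let u ∈ C²(𝒟) satisfy Δu(x) ≤ c e^{2u(x)} for all x ∈ 𝒟, and suppose u(x) → ∞ as |x| → 1⁻. Then u(x) ≥ log(2/(√c (1 − |x|²))) for all x ∈ 𝒟. (With c = 1/(2t) this gives the lower bound u(x,t) ≥ log(2/(1−|x|²)) + (1/2) log(2t) for a Ricci flow with curvature K[u(t)] ≥ −1/(2t) that blows up at the boundary.) -/
open Real MeasureTheory Metric Set Filter Topology ENNReal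

/-- The plane `ℝ²`. -/
abbrev Plane := EuclideanSpace ℝ (Fin 2)

/-- The Euclidean Laplacian `Δu = ∑ᵢ ∂²u/∂xᵢ²` on `ℝ²`. -/
noncomputable def laplacian (u : Plane → ℝ) (x : Plane) : ℝ :=
  ∑ i : Fin 2, iteratedFDeriv ℝ 2 u x (fun _ => EuclideanSpace.single i 1)

/-!
For `a > 1` the function `h_a(z) = log (2a / (√c (a² - |z|²)))`, the conformal factor of the
complete metric of curvature `-c` on the disk of radius `a`, solves `Δ h_a = c e^{2 h_a}` and is
bounded on the closed unit disk. As `u → ∞` at the unit circle, `h_a - u` attains its maximum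
over `𝒟` at an interior point `z₀`, where `Δ (h_a - u) ≤ 0`. If `h_a(z₀) > u(z₀)` this gives
`c e^{2 h_a} = Δ h_a ≤ Δ u ≤ c e^{2u} < c e^{2 h_a}` at `z₀`; hence `h_a ≤ u` on `𝒟`, and
`a → 1⁺` gives the bound.
-/

open InnerProductSpace
open scoped Laplacian

theorem IsLocalMax.deriv_deriv_nonpos {f : ℝ → ℝ} {x₀ : ℝ} (hmax : IsLocalMax f x₀)
    (hc : ContinuousAt f x₀) : deriv (deriv f) x₀ ≤ 0 := by
  by_contra! hpos
  -- By the second-derivative test `x₀` is also a local minimum, so `f` is locally constant.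
  have hmin : IsLocalMin f x₀ := isLocalMin_of_deriv_deriv_pos hpos hmax.deriv_eq_zero hc
  have hconst : f =ᶠ[𝓝 x₀] fun _ => f x₀ := by
    filter_upwards [hmax, hmin] with y hy hy' using le_antisymm hy hy'
  have hderiv : deriv f =ᶠ[𝓝 x₀] fun _ => 0 :=
    hconst.deriv.mono fun y hy => by rw [hy, deriv_const]
  rw [hderiv.deriv_eq, deriv_const] at hpos
  exact hpos.false

theorem deriv_deriv_log_quadratic {γ β : ℝ} (hγ : 0 < γ) :
    deriv (deriv fun t : ℝ => Real.log (γ - 2 * β * t - t ^ 2)) 0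
      = -(2 * γ + 4 * β ^ 2) / γ ^ 2 := by
  set q : ℝ → ℝ := fun t => γ - 2 * β * t - t ^ 2
  have hq (t : ℝ) : HasDerivAt q (-2 * β - 2 * t) t := by
    have := (((hasDerivAt_id' t).const_mul (2 * β)).const_sub γ).fun_sub (hasDerivAt_pow 2 t)
    exact this.congr_deriv (by norm_num)
  have hq0 : q 0 = γ := by simp [q]
  have hqpos : ∀ᶠ t in 𝓝 (0 : ℝ), 0 < q t :=
    continuousAt_const.eventually_lt (hq 0).continuousAt (by rwa [hq0])
  have hderiv : deriv (fun t => Real.log (q t)) =ᶠ[𝓝 0] fun t => (-2 * β - 2 * t) / q t := by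
    filter_upwards [hqpos] with t ht
    exact ((hq t).log ht.ne').deriv
  have hnum : HasDerivAt (fun t : ℝ => -2 * β - 2 * t) (-2) 0 := by
    simpa using ((hasDerivAt_id (0 : ℝ)).const_mul 2).const_sub (-2 * β)
  rw [hderiv.deriv_eq, (hnum.fun_div (hq 0) (by rw [hq0]; exact hγ.ne')).deriv, hq0]
  field_simp
  ring

section NormedSpace

variable {E F : Type*} [NormedAddCommGroup E] [NormedSpace ℝ E]
  [NormedAddCommGroup F] [NormedSpace ℝ F]

theorem iteratedFDeriv_two_apply_self_eq_deriv_deriv {f : E → F} {x : E}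
    (hf : ContDiffAt ℝ 2 f x) (v : E) :
    iteratedFDeriv ℝ 2 f x ![v, v] = deriv (deriv fun t : ℝ => f (x + t • v)) 0 := by
  have hline (t : ℝ) : HasDerivAt (fun s : ℝ => x + s • v) v t := by
    simpa using ((hasDerivAt_id t).smul_const v).const_add x
  have hdiff : ∀ᶠ t in 𝓝 (0 : ℝ), DifferentiableAt ℝ f (x + t • v) := by
    have : Tendsto (fun t : ℝ => x + t • v) (𝓝 0) (𝓝 x) := by
      simpa using (hline 0).continuousAt.tendsto
    exact this.eventually ((hf.eventually (by norm_num)).mono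
      fun y hy => hy.differentiableAt two_ne_zero)
  have hfirst : deriv (fun t : ℝ => f (x + t • v)) =ᶠ[𝓝 0]
      fun t => fderiv ℝ f (x + t • v) v := by
    filter_upwards [hdiff] with t ht
    exact (ht.hasFDerivAt.comp_hasDerivAt t (hline t)).deriv
  have hf' : HasFDerivAt (fderiv ℝ f) (fderiv ℝ (fderiv ℝ f) x) (x + (0 : ℝ) • v) := by
    rw [zero_smul, add_zero]
    exact ((hf.fderiv_right (m := 1) le_rfl).differentiableAt one_ne_zero).hasFDerivAt
  have hsecond : HasDerivAt (fun t : ℝ => fderiv ℝ f (x + t • v) v)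
      (fderiv ℝ (fderiv ℝ f) x v v) 0 := by
    have h1 : HasDerivAt (fun t : ℝ => fderiv ℝ f (x + t • v)) (fderiv ℝ (fderiv ℝ f) x v) 0 :=
      hf'.comp_hasDerivAt (x := (0 : ℝ)) (hline 0)
    have h2 := h1.clm_apply (hasDerivAt_const (0 : ℝ) v)
    simp only [ContinuousLinearMap.map_zero, add_zero] at h2
    exact h2
  rw [iteratedFDeriv_two_apply, hfirst.deriv_eq, hsecond.deriv]
  rfl

theorem IsLocalMax.iteratedFDeriv_two_apply_self_nonpos {f : E → ℝ} {x : E}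
    (hmax : IsLocalMax f x) (hf : ContDiffAt ℝ 2 f x) (v : E) :
    iteratedFDeriv ℝ 2 f x ![v, v] ≤ 0 := by
  set L : ℝ → E := fun t => x + t • v
  have hL : ContinuousAt L 0 := by fun_prop
  have hL0 : L 0 = x := by simp [L]
  rw [iteratedFDeriv_two_apply_self_eq_deriv_deriv hf]
  rw [← hL0] at hmax hf
  exact (hmax.comp_continuous hL).deriv_deriv_nonpos (hf.continuousAt.comp hL)

end NormedSpace

section InnerProductSpace

variable {E : Type*} [NormedAddCommGroup E] [InnerProductSpace ℝ E]

theorem norm_add_smul_sq_of_norm_eq_one (z : E) {e : E} (he : ‖e‖ = 1) (t : ℝ) :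
    ‖z + t • e‖ ^ 2 = ‖z‖ ^ 2 + 2 * ⟪z, e⟫_ℝ * t + t ^ 2 := by
  rw [norm_add_sq_real, real_inner_smul_right, norm_smul, he, Real.norm_eq_abs, mul_one, sq_abs]
  ring

variable [FiniteDimensional ℝ E]

theorem IsLocalMax.laplacian_nonpos {f : E → ℝ} {x : E} (hmax : IsLocalMax f x)
    (hf : ContDiffAt ℝ 2 f x) : Δ f x ≤ 0 := by
  rw [laplacian_eq_iteratedFDeriv_stdOrthonormalBasis]
  exact Finset.sum_nonpos fun i _ => hmax.iteratedFDeriv_two_apply_self_nonpos hf _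

theorem laplacian_log_sub_norm_sq {r : ℝ} {z : E} (hz : ‖z‖ ^ 2 < r) :
    Δ (fun y : E => Real.log (r - ‖y‖ ^ 2)) z
      = -(2 * Module.finrank ℝ E * (r - ‖z‖ ^ 2) + 4 * ‖z‖ ^ 2) / (r - ‖z‖ ^ 2) ^ 2 := by
  have hγ : 0 < r - ‖z‖ ^ 2 := sub_pos.2 hz
  have hf : ContDiffAt ℝ 2 (fun y : E => Real.log (r - ‖y‖ ^ 2)) z :=
    (contDiffAt_log.2 hγ.ne').comp z (contDiff_const.sub (contDiff_norm_sq ℝ)).contDiffAt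
  have hline {e : E} (he : ‖e‖ = 1) :
      iteratedFDeriv ℝ 2 (fun y : E => Real.log (r - ‖y‖ ^ 2)) z ![e, e]
        = -(2 * (r - ‖z‖ ^ 2) + 4 * ⟪z, e⟫_ℝ ^ 2) / (r - ‖z‖ ^ 2) ^ 2 := by
    rw [iteratedFDeriv_two_apply_self_eq_deriv_deriv hf, ← deriv_deriv_log_quadratic hγ]
    congr 2 with t
    rw [norm_add_smul_sq_of_norm_eq_one z he]
    ring_nf
  rw [laplacian_eq_iteratedFDeriv_stdOrthonormalBasis]
  set b := stdOrthonormalBasis ℝ E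
  have hsum : ∑ i, ⟪z, b i⟫_ℝ ^ 2 = ‖z‖ ^ 2 := by
    simpa [sq, real_inner_comm] using b.sum_inner_mul_inner z z
  simp only [hline (b.orthonormal.1 _), ← Finset.sum_div, Finset.sum_neg_distrib,
    Finset.sum_add_distrib, ← Finset.mul_sum, hsum, Finset.sum_const, Finset.card_univ,
    Fintype.card_fin, nsmul_eq_mul]
  ring

theorem le_of_isLocalMax_sub_of_laplacian {c : ℝ} (hc : 0 < c) {b u : E → ℝ} {z : E}
    (hb : ContDiffAt ℝ 2 b z) (hu : ContDiffAt ℝ 2 u z) (hmax : IsLocalMax (b - u) z)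
    (hΔb : c * exp (2 * b z) ≤ Δ b z) (hΔu : Δ u z ≤ c * exp (2 * u z)) : b z ≤ u z := by
  by_contra! h
  have hΔ : Δ b z - Δ u z ≤ 0 := hb.laplacian_sub hu ▸ hmax.laplacian_nonpos (hb.sub hu)
  have hexp : c * exp (2 * u z) < c * exp (2 * b z) := by gcongr
  linarith

end InnerProductSpace

theorem exists_isMaxOn_ball_of_tendsto_atBot {E : Type*} [NormedAddCommGroup E] [ProperSpace E]
    {R : ℝ} (hR : 0 < R) {w : E → ℝ} (hw : ContinuousOn w (ball 0 R))
    (hbdry : Tendsto w (comap (‖·‖) (𝓝[<] R)) atBot) :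
    ∃ z ∈ ball (0 : E) R, IsMaxOn w (ball 0 R) z := by
  obtain ⟨l, hlR, hl⟩ : ∃ l < R, ∀ z : E, ‖z‖ ∈ Ioo l R → w z < w 0 := by
    have := hbdry.eventually (eventually_lt_atBot (w 0))
    rw [eventually_comap] at this
    obtain ⟨l, hl, hsub⟩ := mem_nhdsLT_iff_exists_Ioo_subset.1 this
    exact ⟨l, hl, fun z hz => hsub hz z rfl⟩
  set ρ := max l 0
  have hK : closedBall (0 : E) ρ ⊆ ball 0 R := closedBall_subset_ball (max_lt hlR hR)
  obtain ⟨z₀, hz₀, hmax⟩ := (isCompact_closedBall (0 : E) ρ).exists_isMaxOn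
    (nonempty_closedBall.2 (le_max_right _ _)) (hw.mono hK)
  refine ⟨z₀, hK hz₀, fun z hz => ?_⟩
  by_cases hzρ : ‖z‖ ≤ ρ
  · exact hmax (mem_closedBall_zero_iff.2 hzρ)
  · have hz0 : w z < w 0 :=
      hl z ⟨(le_max_left _ _).trans_lt (not_le.1 hzρ), mem_ball_zero_iff.1 hz⟩
    exact hz0.le.trans (hmax (mem_closedBall_self (le_max_right _ _)))

theorem laplacian_eq_innerProductSpace_laplacian (u : Plane → ℝ) : laplacian u = Δ u := by
  rw [laplacian_eq_iteratedFDeriv_orthonormalBasis u (EuclideanSpace.basisFun (Fin 2) ℝ)]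
  ext x
  simp only [laplacian, EuclideanSpace.basisFun_apply]
  congr! 2 with i
  ext j
  fin_cases j <;> rfl

noncomputable def hyperbolicFactor (c a : ℝ) (z : Plane) : ℝ :=
  Real.log (2 * a / √c) - Real.log (a ^ 2 - ‖z‖ ^ 2)

section hyperbolicFactor

variable {c a : ℝ} {z : Plane}

theorem contDiffAt_hyperbolicFactor (hz : ‖z‖ < a) :
    ContDiffAt ℝ 2 (hyperbolicFactor c a) z := by
  have hγ : a ^ 2 - ‖z‖ ^ 2 ≠ 0 := by nlinarith [norm_nonneg z]
  exact contDiffAt_const.sub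
    ((contDiffAt_log.2 hγ).comp z (contDiff_const.sub (contDiff_norm_sq ℝ)).contDiffAt)

theorem laplacian_hyperbolicFactor (hc : 0 < c) (hz : ‖z‖ < a) :
    Δ (hyperbolicFactor c a) z = c * exp (2 * hyperbolicFactor c a z) := by
  have ha : 0 < a := (norm_nonneg z).trans_lt hz
  have hγ : 0 < a ^ 2 - ‖z‖ ^ 2 := by nlinarith [norm_nonneg z]
  have hlog : ContDiffAt ℝ 2 (fun y : Plane => Real.log (a ^ 2 - ‖y‖ ^ 2)) z :=
    (contDiffAt_log.2 hγ.ne').comp z (contDiff_const.sub (contDiff_norm_sq ℝ)).contDiffAt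
  have hΔ : Δ (hyperbolicFactor c a) z = 4 * a ^ 2 / (a ^ 2 - ‖z‖ ^ 2) ^ 2 := by
    rw [show hyperbolicFactor c a
        = (fun _ => Real.log (2 * a / √c)) - fun y => Real.log (a ^ 2 - ‖y‖ ^ 2) from rfl,
      contDiffAt_const.laplacian_sub hlog, laplacian_log_sub_norm_sq (by nlinarith),
      laplacian_const, Pi.zero_apply, finrank_euclideanSpace, Fintype.card_fin]
    field_simp
    ring
  have hexp : exp (hyperbolicFactor c a z) = 2 * a / √c / (a ^ 2 - ‖z‖ ^ 2) := by
    rw [hyperbolicFactor, exp_sub, exp_log (by positivity), exp_log hγ]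
  rw [hΔ, two_mul, exp_add, hexp]
  have hc' : √c ^ 2 = c := sq_sqrt hc.le
  field_simp
  rw [hc']
  ring

theorem continuousAt_hyperbolicFactor_radius (hc : 0 < c) (hz : ‖z‖ < a) :
    ContinuousAt (fun a => hyperbolicFactor c a z) a := by
  have ha : 0 < a := (norm_nonneg z).trans_lt hz
  have hγ : a ^ 2 - ‖z‖ ^ 2 ≠ 0 := by nlinarith [norm_nonneg z]
  exact ((continuousAt_id.const_mul 2).div_const _).log
      (by have := sqrt_pos.2 hc; simp only [id]; positivity) |>.sub
    (((continuousAt_id.pow 2).sub continuousAt_const).log hγ)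

theorem hyperbolicFactor_one (hc : 0 < c) (hz : ‖z‖ < 1) :
    hyperbolicFactor c 1 z = Real.log (2 / (√c * (1 - ‖z‖ ^ 2))) := by
  have hγ : 0 < 1 - ‖z‖ ^ 2 := by nlinarith [norm_nonneg z]
  rw [hyperbolicFactor, ← div_div, Real.log_div (by positivity) hγ.ne', mul_one, one_pow]

theorem hyperbolicFactor_le_of_laplacian_le (hc : 0 < c) (ha : 1 < a) {u : Plane → ℝ}
    (hu : ContDiffOn ℝ 2 u (ball 0 1))
    (hΔ : ∀ x ∈ ball (0 : Plane) 1, laplacian u x ≤ c * exp (2 * u x))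
    (hblow : Tendsto u (comap (fun x : Plane => ‖x‖) (𝓝[<] (1 : ℝ))) atTop) :
    ∀ z ∈ ball (0 : Plane) 1, hyperbolicFactor c a z ≤ u z := by
  have hbdd : ∀ᶠ z in comap (fun x : Plane => ‖x‖) (𝓝[<] (1 : ℝ)),
      hyperbolicFactor c a z ≤ Real.log (2 * a / √c) - Real.log (a ^ 2 - 1) := by
    refine eventually_comap.2 (eventually_nhdsWithin_of_forall fun r (hr : r < 1) z hz => ?_)
    subst hz
    have := Real.log_le_log (by nlinarith) (by nlinarith [norm_nonneg z] :
      a ^ 2 - 1 ≤ a ^ 2 - ‖z‖ ^ 2)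
    rw [hyperbolicFactor]
    linarith
  have hbdry : Tendsto (hyperbolicFactor c a - u)
      (comap (fun x : Plane => ‖x‖) (𝓝[<] (1 : ℝ))) atBot :=
    (tendsto_atBot_add_left_of_ge' _ _ hbdd (tendsto_neg_atTop_atBot.comp hblow)).congr
      fun z => (sub_eq_add_neg _ _).symm
  have hcont : ContinuousOn (hyperbolicFactor c a - u) (ball 0 1) := fun z hz =>
    ((contDiffAt_hyperbolicFactor ((mem_ball_zero_iff.1 hz).trans ha)).continuousAt.sub
      ((hu.continuousOn z hz).continuousAt (isOpen_ball.mem_nhds hz))).continuousWithinAt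
  obtain ⟨z₀, hz₀, hmax⟩ := exists_isMaxOn_ball_of_tendsto_atBot one_pos hcont hbdry
  have hz₀a : ‖z₀‖ < a := (mem_ball_zero_iff.1 hz₀).trans ha
  have hle : hyperbolicFactor c a z₀ ≤ u z₀ :=
    le_of_isLocalMax_sub_of_laplacian hc (contDiffAt_hyperbolicFactor hz₀a)
      (hu.contDiffAt (isOpen_ball.mem_nhds hz₀)) (hmax.isLocalMax (isOpen_ball.mem_nhds hz₀))
      (laplacian_hyperbolicFactor hc hz₀a).ge
      (laplacian_eq_innerProductSpace_laplacian u ▸ hΔ z₀ hz₀)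
  intro z hz
  have : (hyperbolicFactor c a - u) z ≤ (hyperbolicFactor c a - u) z₀ := hmax hz
  simp only [Pi.sub_apply] at this
  linarith

end hyperbolicFactor

/-- elliptic comparison from below: if `u ∈ C²(𝒟)` satisfies
`Δu ≤ c e^{2u}` and `u(x) → ∞` as `|x| → 1⁻`, then `u` is bounded below by the conformal
factor `log(2/(√c (1-|x|²)))` of the complete metric of constant curvature `-c` on `𝒟`. -/
theorem conformal_factor_lower_bound (c : ℝ) (hc : 0 < c) (u : Plane → ℝ)
    (hu : ContDiffOn ℝ 2 u (ball 0 1))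
    (hΔ : ∀ x ∈ ball (0 : Plane) 1, laplacian u x ≤ c * exp (2 * u x))
    (hblow : Tendsto u (comap (fun x : Plane => ‖x‖) (𝓝[<] (1 : ℝ))) atTop) :
    ∀ x ∈ ball (0 : Plane) 1,
      Real.log (2 / (Real.sqrt c * (1 - ‖x‖ ^ 2))) ≤ u x := by
  intro x hx
  have hx1 : ‖x‖ < 1 := mem_ball_zero_iff.1 hx
  rw [← hyperbolicFactor_one hc hx1]
  exact le_of_tendsto
    ((continuousAt_hyperbolicFactor_radius hc hx1).tendsto.mono_left nhdsWithin_le_nhds)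
    (eventually_nhdsWithin_of_forall (s := Ioi 1) fun a (ha : 1 < a) =>
      hyperbolicFactor_le_of_laplacian_le hc ha hu hΔ hblow x hx)
end

section
/- Let r > 0, T > 0, and let v be a smooth strictly positive function on the closed cylinder B̄_r × [0,T] satisfying ∂v/∂t = Δ log v there. Set p = (∂v/∂t)/v, and let q : [0,T] → ℝ be a C¹ function with q′(t) = −q(t)² on [0,T]. If p(x,0) ≥ q(0) for all |x| ≤ r and p(x,t) ≥ q(t) for all |x| = r and 0 ≤ t ≤ T, then p(x,t) ≥ q(t) for all |x| ≤ r and 0 ≤ t ≤ T. -/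
open Real MeasureTheory Metric Set Filter Topology ENNReal

section Helpers

variable {E F : Type*} [NormedAddCommGroup E] [NormedSpace ℝ E]
  [NormedAddCommGroup F] [NormedSpace ℝ F]

private lemma fderiv_apply1 (Φ : E → (E →L[ℝ] ℝ)) (z : E) (w a : E)
    (h : DifferentiableAt ℝ Φ z) :
    fderiv ℝ (fun y => Φ y w) z a = fderiv ℝ Φ z a w := by
  rw [fderiv_clm_apply h (differentiableAt_const w)]; simp

private lemma fderiv_apply2 (Φ : E → (E →L[ℝ] E →L[ℝ] ℝ)) (z : E) (w w' a : E)
    (h : DifferentiableAt ℝ Φ z) :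
    fderiv ℝ (fun y => Φ y w w') z a = fderiv ℝ Φ z a w w' := by
  have h1 : DifferentiableAt ℝ (fun y => Φ y w) z :=
    h.clm_apply (differentiableAt_const w)
  rw [show (fun y => Φ y w w') = (fun y => (fun u => Φ u w) y w') from rfl]
  rw [fderiv_clm_apply h1 (differentiableAt_const w')]
  simp only [fderiv_const, Pi.zero_apply, ContinuousLinearMap.comp_zero, add_zero,
    ContinuousLinearMap.add_apply, ContinuousLinearMap.flip_apply]
  rw [fderiv_clm_apply h (differentiableAt_const w)]
  simp

private lemma eventually_contDiffAt {f : E → ℝ} {z : E} (hf : ContDiffAt ℝ (⊤ : ℕ∞) f z) :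
    ∀ᶠ y in 𝓝 z, ContDiffAt ℝ 3 f y :=
  (hf.of_le (WithTop.coe_le_coe.2 le_top)).eventually (by simp)

private lemma third_symm_12 {f : E → ℝ} {z : E} (hf : ContDiffAt ℝ (⊤ : ℕ∞) f z) (a b c : E) :
    fderiv ℝ (fderiv ℝ (fderiv ℝ f)) z a b c = fderiv ℝ (fderiv ℝ (fderiv ℝ f)) z b a c := by
  set B₁ := fderiv ℝ f
  set B₂ := fderiv ℝ B₁
  set B₃ := fderiv ℝ B₂
  set L : (E →L[ℝ] ℝ) →L[ℝ] ℝ := ContinuousLinearMap.apply ℝ ℝ c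
  have hB1 : ContDiffAt ℝ (⊤ : ℕ∞) B₁ z := hf.fderiv_right (m := (⊤ : ℕ∞)) (by simp)
  have hB2 : ContDiffAt ℝ (⊤ : ℕ∞) B₂ z := hB1.fderiv_right (m := (⊤ : ℕ∞)) (by simp)
  have hB2' : HasFDerivAt B₂ (B₃ z) z := (hB2.differentiableAt (by simp)).hasFDerivAt
  have hev : ∀ᶠ y in 𝓝 z, HasFDerivAt B₁ (B₂ y) y := by
    filter_upwards [eventually_contDiffAt hf] with y hy
    exact (((hy.fderiv_right (m := 1) (by norm_num))).differentiableAt (by simp)).hasFDerivAt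
  have hf' : ∀ᶠ y in 𝓝 z, HasFDerivAt (fun w => B₁ w c) (L.comp (B₂ y)) y := by
    filter_upwards [hev] with y hy
    exact L.hasFDerivAt.comp y hy
  have hx : HasFDerivAt (fun y => L.comp (B₂ y))
      ((ContinuousLinearMap.compL ℝ E (E →L[ℝ] ℝ) ℝ L).comp (B₃ z)) z := by
    have := HasFDerivAt.comp (g := ContinuousLinearMap.compL ℝ E (E →L[ℝ] ℝ) ℝ L) z
      (ContinuousLinearMap.hasFDerivAt _) hB2'
    exact this
  have := second_derivative_symmetric_of_eventually hf' hx a b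
  simpa [L] using this

private lemma third_symm_23 {f : E → ℝ} {z : E} (hf : ContDiffAt ℝ (⊤ : ℕ∞) f z) (a b c : E) :
    fderiv ℝ (fderiv ℝ (fderiv ℝ f)) z a b c = fderiv ℝ (fderiv ℝ (fderiv ℝ f)) z a c b := by
  have hB2 : DifferentiableAt ℝ (fderiv ℝ (fderiv ℝ f)) z :=
    ((hf.fderiv_right (m := (⊤ : ℕ∞)) (by simp)).fderiv_right (m := (⊤ : ℕ∞)) (by simp)).differentiableAt
      (by simp)
  have he : (fun y => fderiv ℝ (fderiv ℝ f) y b c) =ᶠ[𝓝 z]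
      (fun y => fderiv ℝ (fderiv ℝ f) y c b) := by
    filter_upwards [eventually_contDiffAt hf] with y hy
    exact (hy.isSymmSndFDerivAt (by rw [minSmoothness_of_isRCLikeNormedField]; norm_num)).eq b c
  rw [← fderiv_apply2 _ _ _ _ _ hB2, ← fderiv_apply2 _ _ _ _ _ hB2, he.fderiv_eq]

/-- move the first argument of a third derivative to the last position -/
private lemma third_symm_cycle {f : E → ℝ} {z : E} (hf : ContDiffAt ℝ (⊤ : ℕ∞) f z) (a b : E) :
    fderiv ℝ (fderiv ℝ (fderiv ℝ f)) z a b b = fderiv ℝ (fderiv ℝ (fderiv ℝ f)) z b b a := by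
  rw [third_symm_12 hf a b b, third_symm_23 hf b a b]

private lemma fderiv_fderiv_clm_apply {f : E → ℝ} {z : E} (hf : ContDiffAt ℝ (⊤ : ℕ∞) f z) (c a b : E) :
    fderiv ℝ (fderiv ℝ (fun y => fderiv ℝ f y c)) z a b
      = fderiv ℝ (fderiv ℝ (fderiv ℝ f)) z a b c := by
  set B₁ := fderiv ℝ f
  set B₂ := fderiv ℝ B₁
  set B₃ := fderiv ℝ B₂
  set L : (E →L[ℝ] ℝ) →L[ℝ] ℝ := ContinuousLinearMap.apply ℝ ℝ c
  have hB2 : ContDiffAt ℝ (⊤ : ℕ∞) B₂ z :=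
    (hf.fderiv_right (m := (⊤ : ℕ∞)) (by simp)).fderiv_right (m := (⊤ : ℕ∞)) (by simp)
  have hB2' : HasFDerivAt B₂ (B₃ z) z := (hB2.differentiableAt (by simp)).hasFDerivAt
  have hev : ∀ᶠ y in 𝓝 z, HasFDerivAt B₁ (B₂ y) y := by
    filter_upwards [eventually_contDiffAt hf] with y hy
    exact (((hy.fderiv_right (m := 1) (by norm_num))).differentiableAt (by simp)).hasFDerivAt
  have he : (fderiv ℝ (fun y => B₁ y c)) =ᶠ[𝓝 z] (fun y => L.comp (B₂ y)) := by
    filter_upwards [hev] with y hy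
    exact (L.hasFDerivAt.comp y hy).fderiv
  rw [he.fderiv_eq]
  have hx : HasFDerivAt (fun y => L.comp (B₂ y))
      ((ContinuousLinearMap.compL ℝ E (E →L[ℝ] ℝ) ℝ L).comp (B₃ z)) z := by
    have := HasFDerivAt.comp (g := ContinuousLinearMap.compL ℝ E (E →L[ℝ] ℝ) ℝ L) z
      (ContinuousLinearMap.hasFDerivAt _) hB2'
    exact this
  rw [hx.fderiv]
  rfl

private lemma second_deriv_test {g g' : ℝ → ℝ} {d : ℝ} (hmin : IsLocalMin g 0)
    (hg' : ∀ᶠ s in 𝓝 (0 : ℝ), HasDerivAt g (g' s) s)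
    (hd : HasDerivAt g' d 0) : 0 ≤ d := by
  by_contra hneg
  push_neg at hneg
  have h0 : g' 0 = 0 := hmin.hasDerivAt_eq_zero hg'.self_of_nhds
  have hslope : ∀ᶠ s in 𝓝[>] (0 : ℝ), g' s < 0 := by
    have h1 : Tendsto (slope g' 0) (𝓝[>] (0 : ℝ)) (𝓝 d) :=
      (hasDerivAt_iff_tendsto_slope.1 hd).mono_left
        (nhdsWithin_mono _ (fun s hs => ne_of_gt hs))
    filter_upwards [h1.eventually (eventually_lt_nhds hneg), self_mem_nhdsWithin]
      with s hs hs0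
    have hsl : slope g' 0 s = g' s / s := by
      simp [slope_def_field, h0]
    rw [hsl] at hs
    rcases div_neg_iff.1 hs with h | h
    · exact absurd h.2 (not_lt.2 (le_of_lt hs0))
    · exact h.1
  have H : ∀ᶠ s in 𝓝[>] (0 : ℝ),
      g' s < 0 ∧ g 0 ≤ g s ∧ HasDerivAt g (g' s) s :=
    hslope.and ((hmin.filter_mono nhdsWithin_le_nhds).and (hg'.filter_mono nhdsWithin_le_nhds))
  rcases mem_nhdsGT_iff_exists_Ioo_subset.1 H with ⟨δ, hδ, hsub⟩
  have hδ0 : (0 : ℝ) < δ := hδ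
  set b := δ / 2 with hb
  have hbmem : b ∈ Ioo (0 : ℝ) δ := ⟨by positivity, by simp [hb]; linarith⟩
  have hcont : ContinuousOn g (Icc 0 b) := by
    intro s hs
    rcases eq_or_lt_of_le hs.1 with h | h
    · rw [← h]
      exact hg'.self_of_nhds.continuousAt.continuousWithinAt
    · have hsδ : s ∈ Ioo (0 : ℝ) δ := ⟨h, lt_of_le_of_lt hs.2 hbmem.2⟩
      exact ((hsub hsδ).2.2.continuousAt).continuousWithinAt
  have hanti : StrictAntiOn g (Icc 0 b) := by
    apply strictAntiOn_of_deriv_neg (convex_Icc 0 b) hcont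
    intro s hs
    rw [interior_Icc] at hs
    have hsδ : s ∈ Ioo (0 : ℝ) δ := ⟨hs.1, lt_trans hs.2 hbmem.2⟩
    rw [(hsub hsδ).2.2.deriv]
    exact (hsub hsδ).1
  have : g b < g 0 := hanti (left_mem_Icc.2 (le_of_lt hbmem.1))
    ⟨le_of_lt hbmem.1, le_refl b⟩ hbmem.1
  exact absurd (hsub hbmem).2.1 (not_le.2 this)

private lemma hasDerivAt_slice (Φ : E × ℝ → F) {x : E} {t : ℝ}
    (h : DifferentiableAt ℝ Φ (x, t)) :
    HasDerivAt (fun s => Φ (x, s)) (fderiv ℝ Φ (x, t) (0, 1)) t := by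
  have hc : HasDerivAt (fun s : ℝ => ((x : E), s)) ((0 : E), (1 : ℝ)) t :=
    (hasDerivAt_const t x).prodMk (hasDerivAt_id t)
  exact h.hasFDerivAt.comp_hasDerivAt t hc

private lemma slice_two {f : E × ℝ → ℝ} {x : E} {t : ℝ} (hf : ContDiffAt ℝ (⊤ : ℕ∞) f (x, t)) (e : E) :
    fderiv ℝ (fderiv ℝ (fun y => f (y, t))) x e e
      = fderiv ℝ (fderiv ℝ f) (x, t) (e, 0) (e, 0) := by
  set D : E →L[ℝ] E × ℝ := (ContinuousLinearMap.id ℝ E).prod 0 with hD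
  have hDe : ∀ u : E, D u = (u, 0) := fun u => rfl
  have hι : ∀ y : E, HasFDerivAt (fun y : E => ((y : E), t)) D y := fun y =>
    (hasFDerivAt_id y).prodMk (hasFDerivAt_const t y)
  have hcomp : ContDiffAt ℝ (⊤ : ℕ∞) (fun y : E => f (y, t)) x := by
    have : ContDiff ℝ (⊤ : ℕ∞) (fun y : E => ((y : E), t)) := contDiff_id.prodMk contDiff_const
    exact hf.comp x (this.contDiffAt)
  have hg1 : DifferentiableAt ℝ (fderiv ℝ (fun y : E => f (y, t))) x :=
    (hcomp.fderiv_right (m := (⊤ : ℕ∞)) (by simp)).differentiableAt (by simp)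
  rw [← fderiv_apply1 _ _ _ _ hg1]
  have hstep1 : (fun y => fderiv ℝ (fun y : E => f (y, t)) y e) =ᶠ[𝓝 x]
      (fun y => fderiv ℝ f (y, t) (e, 0)) := by
    have hev : ∀ᶠ y in 𝓝 x, ContDiffAt ℝ 3 f (y, t) := by
      have hc : ContinuousAt (fun y : E => ((y : E), t)) x :=
        (continuous_id.prodMk continuous_const).continuousAt
      exact hc (eventually_contDiffAt hf)
    filter_upwards [hev] with y hy
    have : HasFDerivAt (fun y : E => f (y, t)) ((fderiv ℝ f (y, t)).comp D) y :=
      (hy.differentiableAt (by simp)).hasFDerivAt.comp y (hι y)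
    rw [this.fderiv]; simp [hDe]
  rw [hstep1.fderiv_eq]
  have hdf : DifferentiableAt ℝ (fun z => fderiv ℝ f z (e, 0)) (x, t) :=
    (((hf.fderiv_right (m := (⊤ : ℕ∞)) (by simp))).differentiableAt (by simp)).clm_apply
      (differentiableAt_const _)
  have : HasFDerivAt (fun y : E => fderiv ℝ f (y, t) (e, 0))
      ((fderiv ℝ (fun z => fderiv ℝ f z (e, 0)) (x, t)).comp D) x :=
    HasFDerivAt.comp (g := fun z => fderiv ℝ f z (e, 0)) x hdf.hasFDerivAt (hι x)
  rw [this.fderiv]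
  have := fderiv_apply1 (fderiv ℝ f) (x, t) (e, 0) (e, 0)
    (((hf.fderiv_right (m := (⊤ : ℕ∞)) (by simp))).differentiableAt (by simp))
  simp only [ContinuousLinearMap.comp_apply, hDe]
  rw [this]

private lemma local_min_second_nonneg {f : E → ℝ} {x : E}
    (hf : ContDiffAt ℝ (⊤ : ℕ∞) f x) (hmin : IsLocalMin f x) (e : E) :
    0 ≤ fderiv ℝ (fderiv ℝ f) x e e := by
  set γ : ℝ → E := fun s => x + s • e with hγdef
  have hγ : ∀ s : ℝ, HasDerivAt γ e s := by
    intro s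
    simpa [hγdef] using ((hasDerivAt_id s).smul_const e).const_add x
  have hγ0 : γ 0 = x := by simp [hγdef]
  have hγc : ContinuousAt γ 0 := (hγ 0).continuousAt
  have htend : Tendsto γ (𝓝 0) (𝓝 x) := hγ0 ▸ hγc
  have hming : IsLocalMin (fun s => f (γ s)) 0 := by
    have h2 := htend.eventually hmin
    simpa [IsLocalMin, IsMinFilter, hγ0] using h2
  have hev : ∀ᶠ s in 𝓝 (0 : ℝ), ContDiffAt ℝ 3 f (γ s) :=
    htend.eventually (eventually_contDiffAt hf)
  have hg' : ∀ᶠ s in 𝓝 (0 : ℝ), HasDerivAt (fun s => f (γ s)) (fderiv ℝ f (γ s) e) s := by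
    filter_upwards [hev] with s hs
    exact ((hs.differentiableAt (by simp)).hasFDerivAt).comp_hasDerivAt s (hγ s)
  have hB1 : DifferentiableAt ℝ (fderiv ℝ f) x :=
    (hf.fderiv_right (m := (⊤ : ℕ∞)) (by simp)).differentiableAt (by simp)
  have hh : DifferentiableAt ℝ (fun z => fderiv ℝ f z e) x :=
    hB1.clm_apply (differentiableAt_const e)
  have hd : HasDerivAt (fun s => fderiv ℝ f (γ s) e) (fderiv ℝ (fderiv ℝ f) x e e) 0 := by
    have h1 : HasDerivAt (fun s => fderiv ℝ f (γ s) e)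
        (fderiv ℝ (fun z => fderiv ℝ f z e) (γ 0) e) 0 := by
      exact (hγ0 ▸ hh.hasFDerivAt : HasFDerivAt _ _ (γ 0)).comp_hasDerivAt 0 (hγ 0)
    rw [hγ0, fderiv_apply1 _ _ _ _ hB1] at h1
    exact h1
  exact second_deriv_test hming hg' hd

private lemma laplacian_eq_sum_fderiv (f : Plane → ℝ) (x : Plane) :
    laplacian f x = ∑ i : Fin 2,
      fderiv ℝ (fderiv ℝ f) x (EuclideanSpace.single i 1) (EuclideanSpace.single i 1) := by
  unfold laplacian
  exact Finset.sum_congr rfl fun i _ => iteratedFDeriv_two_apply f x _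

end Helpers

set_option maxHeartbeats 4000000

/-- maximum principle for `p = v_t/v`: let `v` be a smooth positive
solution of `∂v/∂t = Δ log v` on `B̄_r × [0,T]`, let `p = (∂v/∂t)/v`, and let `q` solve the
ODE `q' = -q²` on `[0,T]`. If `p ≥ q` at time `0` and on the lateral boundary `|x| = r`, then
`p ≥ q` on all of `B̄_r × [0,T]`. -/
theorem max_principle_time_ratio (r T : ℝ) (hr : 0 < r) (hT : 0 < T)
    (v : Plane → ℝ → ℝ)
    (hv_smooth : ContDiffOn ℝ (⊤ : ℕ∞) (fun z : Plane × ℝ => v z.1 z.2)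
      (closedBall 0 r ×ˢ Icc (0 : ℝ) T))
    (hv_pos : ∀ x ∈ closedBall (0 : Plane) r, ∀ t ∈ Icc (0 : ℝ) T, 0 < v x t)
    (hv_eq : ∀ x ∈ closedBall (0 : Plane) r, ∀ t ∈ Icc (0 : ℝ) T,
      HasDerivWithinAt (fun s => v x s)
        (laplacian (fun y => Real.log (v y t)) x) (Icc 0 T) t)
    (q : ℝ → ℝ)
    (hq : ∀ t ∈ Icc (0 : ℝ) T, HasDerivWithinAt q (-(q t) ^ 2) (Icc 0 T) t)
    (p : Plane → ℝ → ℝ)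
    (hp : ∀ x : Plane, ∀ t : ℝ, p x t = derivWithin (fun s => v x s) (Icc 0 T) t / v x t)
    (h0 : ∀ x ∈ closedBall (0 : Plane) r, q 0 ≤ p x 0)
    (hside : ∀ x : Plane, ‖x‖ = r → ∀ t ∈ Icc (0 : ℝ) T, q t ≤ p x t) :
    ∀ x ∈ closedBall (0 : Plane) r, ∀ t ∈ Icc (0 : ℝ) T, q t ≤ p x t := by
  classical
  set K : Set (Plane × ℝ) := closedBall 0 r ×ˢ Icc (0 : ℝ) T with hKdef
  set V : Plane × ℝ → ℝ := fun z => v z.1 z.2 with hVdef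
  set G : Plane × ℝ → ℝ := fun z => Real.log (V z) with hGdef
  set τ : Plane × ℝ := ((0 : Plane), (1 : ℝ)) with hτdef
  set U : Set (Plane × ℝ) := ball (0 : Plane) r ×ˢ Ioo (0 : ℝ) T with hUdef
  have hUopen : IsOpen U := isOpen_ball.prod isOpen_Ioo
  have hUK : U ⊆ K := Set.prod_mono ball_subset_closedBall Ioo_subset_Icc_self
  have hIccUD : UniqueDiffOn ℝ (Icc (0 : ℝ) T) := uniqueDiffOn_Icc hT
  have hKUD : UniqueDiffOn ℝ K := by
    apply uniqueDiffOn_convex ((convex_closedBall _ _).prod (convex_Icc _ _))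
    rw [interior_prod_eq, interior_closedBall _ (ne_of_gt hr), interior_Icc]
    exact (nonempty_ball.2 hr).prod (nonempty_Ioo.2 hT)
  have hKcompact : IsCompact K := (isCompact_closedBall _ _).prod isCompact_Icc
  -- basic mapping facts
  have hmemK : ∀ x ∈ closedBall (0 : Plane) r, ∀ t ∈ Icc (0 : ℝ) T, ((x, t) : Plane × ℝ) ∈ K :=
    fun x hx t ht => ⟨hx, ht⟩
  -- time derivative within K (uniqueness on the time slice)
  have hDW : ∀ x ∈ closedBall (0 : Plane) r, ∀ t ∈ Icc (0 : ℝ) T,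
      HasDerivWithinAt (fun s => v x s) (fderivWithin ℝ V K (x, t) τ) (Icc 0 T) t := by
    intro x hx t ht
    have hVd : DifferentiableWithinAt ℝ V K (x, t) :=
      (hv_smooth.differentiableOn (by simp)) _ (hmemK x hx t ht)
    have hcurve : HasDerivWithinAt (fun s : ℝ => ((x : Plane), s)) τ (Icc 0 T) t :=
      (hasDerivWithinAt_const t _ x).prodMk (hasDerivWithinAt_id t _)
    have hmaps : MapsTo (fun s : ℝ => ((x : Plane), s)) (Icc 0 T) K :=
      fun s hs => ⟨hx, hs⟩
    exact hVd.hasFDerivWithinAt.comp_hasDerivWithinAt t hcurve hmaps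
  have hpK : ∀ x ∈ closedBall (0 : Plane) r, ∀ t ∈ Icc (0 : ℝ) T,
      p x t = fderivWithin ℝ V K (x, t) τ / v x t := by
    intro x hx t ht
    rw [hp x t, (hDW x hx t ht).derivWithin (hIccUD t ht)]
  -- continuity of p on K
  have hVcont : ContinuousOn V K := hv_smooth.continuousOn
  have hPcont : ContinuousOn (fun z : Plane × ℝ => p z.1 z.2) K := by
    have h1 : ContinuousOn (fun z => fderivWithin ℝ V K z τ) K := by
      have := hv_smooth.continuousOn_fderivWithin hKUD (by simp)
      exact (ContinuousLinearMap.apply ℝ ℝ τ).continuous.comp_continuousOn this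
    have h2 : ContinuousOn (fun z => fderivWithin ℝ V K z τ / V z) K :=
      h1.div hVcont (fun z hz => ne_of_gt (hv_pos z.1 hz.1 z.2 hz.2))
    apply h2.congr
    intro z hz
    exact hpK z.1 hz.1 z.2 hz.2
  have hqcont : ContinuousOn q (Icc 0 T) := fun t ht => (hq t ht).continuousWithinAt
  -- interior smoothness
  have hVAt : ∀ z ∈ U, ContDiffAt ℝ (⊤ : ℕ∞) V z := fun z hz =>
    hv_smooth.contDiffAt (mem_nhds_iff.2 ⟨U, hUK, hUopen, hz⟩)
  have hVposU : ∀ z ∈ U, 0 < V z := fun z hz => hv_pos z.1 (hUK hz).1 z.2 (hUK hz).2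
  have hGAt : ∀ z ∈ U, ContDiffAt ℝ (⊤ : ℕ∞) G z := fun z hz =>
    (hVAt z hz).log (ne_of_gt (hVposU z hz))
  set B₁ : Plane × ℝ → (Plane × ℝ →L[ℝ] ℝ) := fderiv ℝ G with hB₁def
  set B₂ := fderiv ℝ B₁ with hB₂def
  set B₃ := fderiv ℝ B₂ with hB₃def
  -- p in the interior
  have hB₁eq : ∀ z ∈ U, B₁ z = (V z)⁻¹ • fderiv ℝ V z := by
    intro z hz
    have hGd : HasFDerivAt G ((V z)⁻¹ • fderiv ℝ V z) z :=
      (Real.hasDerivAt_log (ne_of_gt (hVposU z hz))).comp_hasFDerivAt z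
        ((hVAt z hz).differentiableAt (by simp)).hasFDerivAt
    exact hGd.fderiv
  have hVt_p : ∀ z ∈ U, fderiv ℝ V z τ = V z * B₁ z τ := by
    intro z hz
    rw [hB₁eq z hz]
    simp only [ContinuousLinearMap.coe_smul', Pi.smul_apply, smul_eq_mul]
    field_simp [ne_of_gt (hVposU z hz)]
  have hfderiv_eq : ∀ z ∈ U, fderivWithin ℝ V K z τ = fderiv ℝ V z τ := by
    intro z hz
    rw [fderivWithin_of_mem_nhds (mem_nhds_iff.2 ⟨U, hUK, hUopen, hz⟩)]
  have hp_int : ∀ z ∈ U, p z.1 z.2 = B₁ z τ := by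
    intro z hz
    have hzK := hUK hz
    have hV0 : V z ≠ 0 := ne_of_gt (hVposU z hz)
    rw [hpK z.1 hzK.1 z.2 hzK.2, hfderiv_eq z hz, hB₁eq z hz]
    show fderiv ℝ V z τ / V z = ((V z)⁻¹ • fderiv ℝ V z) τ
    simp only [ContinuousLinearMap.coe_smul', Pi.smul_apply, smul_eq_mul]
    field_simp
  -- the PDE, in interior form
  have hPDE : ∀ z ∈ U, (∑ i : Fin 2,
      B₂ z (EuclideanSpace.single i 1, (0 : ℝ)) (EuclideanSpace.single i 1, (0 : ℝ)))
        = V z * B₁ z τ := by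
    intro z hz
    obtain ⟨x, t⟩ := z
    have hzK := hUK hz
    have h1 : derivWithin (fun s => v x s) (Icc 0 T) t
        = laplacian (fun y => Real.log (v y t)) x :=
      (hv_eq x hzK.1 t hzK.2).derivWithin (hIccUD t hzK.2)
    have h3 : derivWithin (fun s => v x s) (Icc 0 T) t = fderivWithin ℝ V K (x, t) τ :=
      (hDW x hzK.1 t hzK.2).derivWithin (hIccUD t hzK.2)
    have h4 : laplacian (fun y => Real.log (v y t)) x = ∑ i : Fin 2,
        B₂ (x, t) (EuclideanSpace.single i 1, (0 : ℝ)) (EuclideanSpace.single i 1, (0 : ℝ)) := by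
      rw [laplacian_eq_sum_fderiv]
      refine Finset.sum_congr rfl fun i _ => ?_
      have := slice_two (f := G) (x := x) (t := t) (hGAt _ hz) (EuclideanSpace.single i 1)
      exact this
    rw [← h4, ← h1, h3, hfderiv_eq _ hz, hVt_p _ hz]
  -- ### The key quantitative step
  -- bound for |p + q| on K
  obtain ⟨M₀, hM₀⟩ := hKcompact.exists_bound_of_continuousOn
    (f := fun z : Plane × ℝ => p z.1 z.2 + q z.2)
    (hPcont.add (hqcont.comp continuous_snd.continuousOn (fun z hz => hz.2)))
  set M : ℝ := max M₀ 0 with hMdef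
  have hM : ∀ z ∈ K, |p z.1 z.2 + q z.2| ≤ M := by
    intro z hz
    calc |p z.1 z.2 + q z.2| ≤ M₀ := by simpa using hM₀ z hz
    _ ≤ M := le_max_left _ _
  -- main epsilon/T' lemma
  have key : ∀ T', 0 < T' → T' < T → ∀ ε, 0 < ε → ∀ x ∈ closedBall (0 : Plane) r,
      ∀ t ∈ Icc (0 : ℝ) T',
      0 < (p x t - q t) * Real.exp (-M * t) + ε * (1 + t) := by
    intro T' hT'0 hT'T ε hε
    set W : Plane × ℝ → ℝ :=
      fun z => (p z.1 z.2 - q z.2) * Real.exp (-M * z.2) + ε * (1 + z.2) with hWdef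
    set K' : Set (Plane × ℝ) := closedBall 0 r ×ˢ Icc (0 : ℝ) T' with hK'def
    have hK'K : K' ⊆ K := Set.prod_mono Subset.rfl (Icc_subset_Icc_right hT'T.le)
    have hK'c : IsCompact K' := (isCompact_closedBall _ _).prod isCompact_Icc
    have hK'ne : K'.Nonempty := ⟨(0, 0), mem_closedBall_self hr.le, le_refl 0, hT'0.le⟩
    have hWc : ContinuousOn W K' := by
      apply ContinuousOn.add
      · apply ContinuousOn.mul
        · exact ((hPcont.mono hK'K).sub
            (((hqcont.mono (Icc_subset_Icc_right hT'T.le)).comp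
              continuous_snd.continuousOn (fun z hz => hz.2))))
        · exact (Real.continuous_exp.comp (continuous_const.mul continuous_snd)).continuousOn
      · exact (continuous_const.mul (continuous_const.add continuous_snd)).continuousOn
    obtain ⟨z₀, hz₀K', hz₀min⟩ := hK'c.exists_isMinOn hK'ne hWc
    suffices hpos : 0 < W z₀ by
      intro x hx t ht
      exact lt_of_lt_of_le hpos (isMinOn_iff.1 hz₀min (x, t) ⟨hx, ht⟩)
    by_contra hle
    push_neg at hle
    obtain ⟨x₀, t₀⟩ := z₀
    simp only [hWdef] at hle
    have hx₀ : x₀ ∈ closedBall (0 : Plane) r := hz₀K'.1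
    have ht₀ : t₀ ∈ Icc (0 : ℝ) T' := hz₀K'.2
    have ht₀T : t₀ ∈ Icc (0 : ℝ) T := ⟨ht₀.1, le_trans ht₀.2 hT'T.le⟩
    -- not at time 0
    have ht₀0 : 0 < t₀ := by
      rcases eq_or_lt_of_le ht₀.1 with h | h
      · exfalso
        rw [← h] at hle
        simp only [mul_zero, neg_zero, Real.exp_zero, mul_one, add_zero] at hle
        linarith only [hle, hε, h0 x₀ hx₀]
      · exact h
    -- not on the lateral boundary
    have hx₀r : ‖x₀‖ < r := by
      rcases lt_or_eq_of_le (mem_closedBall_zero_iff.1 hx₀) with h | h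
      · exact h
      · exfalso
        have hq' := hside x₀ h t₀ ht₀T
        have hexp0 : 0 < Real.exp (-M * t₀) := Real.exp_pos _
        have h1t : 0 < 1 + t₀ := by linarith only [ht₀.1]
        nlinarith only [hle, hq', hexp0, h1t, hε,
          mul_nonneg (sub_nonneg.2 hq') hexp0.le, mul_pos hε h1t]
    have hz₀U : ((x₀, t₀) : Plane × ℝ) ∈ U :=
      ⟨mem_ball_zero_iff.2 hx₀r, ht₀0, lt_of_le_of_lt ht₀.2 hT'T⟩
    set P₀ : ℝ := p x₀ t₀ with hP₀def
    set Q₀ : ℝ := q t₀ with hQ₀def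
    set Ex : ℝ := Real.exp (-M * t₀) with hExdef
    have hExpos : 0 < Ex := Real.exp_pos _
    -- p - q < 0 at the minimum
    have hplt : P₀ - Q₀ < 0 := by
      by_contra hc
      push_neg at hc
      have h8 : 0 ≤ (P₀ - Q₀) * Ex := mul_nonneg hc hExpos.le
      have h1t : 0 < 1 + t₀ := by linarith only [ht₀.1]
      nlinarith only [hle, h8, mul_pos hε h1t]
    -- bound p+q+M ≥ 0
    have hpqM : 0 ≤ P₀ + Q₀ + M := by
      have := hM (x₀, t₀) (hK'K hz₀K')
      have habs := abs_le.1 this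
      simp only at habs
      linarith only [habs.1]
    -- eventually in time we stay in U
    have hUevt : ∀ᶠ s in 𝓝 t₀, ((x₀, s) : Plane × ℝ) ∈ U := by
      have hopen : IsOpen {s : ℝ | ((x₀, s) : Plane × ℝ) ∈ U} :=
        hUopen.preimage (Continuous.prodMk_right x₀)
      exact hopen.mem_nhds hz₀U
    -- differentiability bookkeeping at z₀
    have hGz₀ : ContDiffAt ℝ (⊤ : ℕ∞) G (x₀, t₀) := hGAt _ hz₀U
    have hB₁diff : DifferentiableAt ℝ B₁ (x₀, t₀) :=
      (hGz₀.fderiv_right (m := (⊤ : ℕ∞)) (by simp)).differentiableAt (by simp)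
    have hB₂diff : DifferentiableAt ℝ B₂ (x₀, t₀) :=
      ((hGz₀.fderiv_right (m := (⊤ : ℕ∞)) (by simp)).fderiv_right (m := (⊤ : ℕ∞))
        (by simp)).differentiableAt (by simp)
    have hVdiff : DifferentiableAt ℝ V (x₀, t₀) :=
      (hVAt _ hz₀U).differentiableAt (by simp)
    -- (F1) time derivative of p
    set A : ℝ := B₂ (x₀, t₀) τ τ with hAdef
    have hslice1 : HasDerivAt (fun s => B₁ (x₀, s) τ) A t₀ := by
      have h1 : HasDerivAt (fun s => (fun z => B₁ z τ) (x₀, s))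
          (fderiv ℝ (fun z => B₁ z τ) (x₀, t₀) τ) t₀ :=
        hasDerivAt_slice (fun z => B₁ z τ) (hB₁diff.clm_apply (differentiableAt_const τ))
      rwa [fderiv_apply1 _ _ _ _ hB₁diff] at h1
    have hpev : (fun s => p x₀ s) =ᶠ[𝓝 t₀] (fun s => B₁ (x₀, s) τ) := by
      filter_upwards [hUevt] with s hs
      exact hp_int (x₀, s) hs
    have hpd : HasDerivAt (fun s => p x₀ s) A t₀ := hslice1.congr_of_eventuallyEq hpev
    -- (F3)/(F4) : equation for A
    have hsumd : HasDerivAt (fun t => ∑ i : Fin 2,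
        B₂ (x₀, t) (EuclideanSpace.single i 1, (0 : ℝ)) (EuclideanSpace.single i 1, (0 : ℝ)))
        (∑ i : Fin 2,
          B₃ (x₀, t₀) τ (EuclideanSpace.single i 1, (0 : ℝ))
            (EuclideanSpace.single i 1, (0 : ℝ))) t₀ := by
      apply HasDerivAt.fun_sum
      intro i _
      set w : Plane × ℝ := (EuclideanSpace.single i 1, (0 : ℝ))
      have h1 : HasDerivAt (fun s => (fun z => B₂ z w w) (x₀, s))
          (fderiv ℝ (fun z => B₂ z w w) (x₀, t₀) τ) t₀ :=
        hasDerivAt_slice (fun z => B₂ z w w)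
          ((hB₂diff.clm_apply (differentiableAt_const w)).clm_apply (differentiableAt_const w))
      rwa [fderiv_apply2 _ _ _ _ _ hB₂diff] at h1
    have hVslice : HasDerivAt (fun s => V (x₀, s)) (fderiv ℝ V (x₀, t₀) τ) t₀ :=
      hasDerivAt_slice V hVdiff
    have hprod : HasDerivAt (fun s => V (x₀, s) * B₁ (x₀, s) τ)
        (fderiv ℝ V (x₀, t₀) τ * B₁ (x₀, t₀) τ + V (x₀, t₀) * A) t₀ :=
      hVslice.mul hslice1
    have hcongr : (fun s => ∑ i : Fin 2,
        B₂ (x₀, s) (EuclideanSpace.single i 1, (0 : ℝ)) (EuclideanSpace.single i 1, (0 : ℝ)))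
          =ᶠ[𝓝 t₀] (fun s => V (x₀, s) * B₁ (x₀, s) τ) := by
      filter_upwards [hUevt] with s hs
      exact hPDE (x₀, s) hs
    have hsumd' : HasDerivAt (fun t => ∑ i : Fin 2,
        B₂ (x₀, t) (EuclideanSpace.single i 1, (0 : ℝ)) (EuclideanSpace.single i 1, (0 : ℝ)))
        (fderiv ℝ V (x₀, t₀) τ * B₁ (x₀, t₀) τ + V (x₀, t₀) * A) t₀ :=
      hprod.congr_of_eventuallyEq hcongr
    have hEqA : (∑ i : Fin 2, B₃ (x₀, t₀) τ (EuclideanSpace.single i 1, (0 : ℝ))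
          (EuclideanSpace.single i 1, (0 : ℝ)))
        = fderiv ℝ V (x₀, t₀) τ * B₁ (x₀, t₀) τ + V (x₀, t₀) * A :=
      hsumd.unique hsumd'
    -- spatial second derivative test
    have hlocmin : IsLocalMin (fun y => B₁ (y, t₀) τ) x₀ := by
      have hminp : IsLocalMin (fun y => p y t₀) x₀ := by
        have hball : closedBall (0 : Plane) r ∈ 𝓝 x₀ :=
          mem_nhds_iff.2 ⟨ball 0 r, ball_subset_closedBall, isOpen_ball,
            mem_ball_zero_iff.2 hx₀r⟩
        have hev2 : ∀ᶠ y in 𝓝 x₀, p x₀ t₀ ≤ p y t₀ := by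
          filter_upwards [hball] with y hy
          have h1 : W (x₀, t₀) ≤ W (y, t₀) := isMinOn_iff.1 hz₀min (y, t₀) ⟨hy, ht₀⟩
          simp only [hWdef] at h1
          have h3 : (p x₀ t₀ - q t₀) * Real.exp (-M * t₀)
              ≤ (p y t₀ - q t₀) * Real.exp (-M * t₀) := by linarith only [h1]
          have h4 := le_of_mul_le_mul_right h3 (Real.exp_pos (-M * t₀))
          linarith only [h4]
        exact hev2
      have hUevx : ∀ᶠ y in 𝓝 x₀, ((y, t₀) : Plane × ℝ) ∈ U := by
        have hopen : IsOpen {y : Plane | ((y, t₀) : Plane × ℝ) ∈ U} :=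
          hUopen.preimage (continuous_id.prodMk continuous_const)
        exact hopen.mem_nhds hz₀U
      have hev : (fun y => p y t₀) =ᶠ[𝓝 x₀] (fun y => B₁ (y, t₀) τ) := by
        filter_upwards [hUevx] with y hy
        exact hp_int (y, t₀) hy
      exact hminp.congr hev
    have hFsmooth : ContDiffAt ℝ (⊤ : ℕ∞) (fun z : Plane × ℝ => B₁ z τ) (x₀, t₀) :=
      (hGz₀.fderiv_right (m := (⊤ : ℕ∞)) (by simp)).clm_apply contDiffAt_const
    have hSnonneg : 0 ≤ ∑ i : Fin 2, B₃ (x₀, t₀) τ (EuclideanSpace.single i 1, (0 : ℝ))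
        (EuclideanSpace.single i 1, (0 : ℝ)) := by
      apply Finset.sum_nonneg
      intro i _
      set e : Plane := EuclideanSpace.single i 1
      have hsliceC : ContDiffAt ℝ (⊤ : ℕ∞) (fun y : Plane => B₁ (y, t₀) τ) x₀ := by
        have hι : ContDiff ℝ (⊤ : ℕ∞) (fun y : Plane => ((y : Plane), t₀)) :=
          contDiff_id.prodMk contDiff_const
        exact hFsmooth.comp x₀ hι.contDiffAt
      have h1 : 0 ≤ fderiv ℝ (fderiv ℝ (fun y : Plane => B₁ (y, t₀) τ)) x₀ e e :=
        local_min_second_nonneg hsliceC hlocmin e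
      have h2 : fderiv ℝ (fderiv ℝ (fun y : Plane => B₁ (y, t₀) τ)) x₀ e e
          = fderiv ℝ (fderiv ℝ (fun z : Plane × ℝ => B₁ z τ)) (x₀, t₀) (e, 0) (e, 0) :=
        slice_two hFsmooth e
      have h3 : fderiv ℝ (fderiv ℝ (fun z : Plane × ℝ => B₁ z τ)) (x₀, t₀) (e, 0) (e, 0)
          = B₃ (x₀, t₀) (e, 0) (e, 0) τ :=
        fderiv_fderiv_clm_apply hGz₀ τ (e, 0) (e, 0)
      rw [h2, h3, ← third_symm_cycle hGz₀ τ (e, 0)] at h1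
      exact h1
    -- assemble the equation : V₀ * A = S - V₀ * P₀²
    have hpB : p x₀ t₀ = B₁ (x₀, t₀) τ := hp_int (x₀, t₀) hz₀U
    have hB₁P : B₁ (x₀, t₀) τ = P₀ := by rw [hP₀def]; exact hpB.symm
    have hVt₀ : fderiv ℝ V (x₀, t₀) τ = V (x₀, t₀) * P₀ := by
      rw [hVt_p _ hz₀U, hB₁P]
    have hV₀pos : 0 < V (x₀, t₀) := hVposU _ hz₀U
    set S : ℝ := ∑ i : Fin 2, B₃ (x₀, t₀) τ (EuclideanSpace.single i 1, (0 : ℝ))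
      (EuclideanSpace.single i 1, (0 : ℝ)) with hSdef
    have hAeq : V (x₀, t₀) * A = S - V (x₀, t₀) * P₀ ^ 2 := by
      rw [hEqA, hVt₀, hB₁P]; ring
    have hA_lb : -P₀ ^ 2 ≤ A := by
      by_contra hc
      push_neg at hc
      have h5 := mul_lt_mul_of_pos_left hc hV₀pos
      rw [hAeq] at h5
      nlinarith only [hSnonneg, h5]
    -- time derivative of W along the slice, and Fermat
    have hqd : HasDerivAt q (-(q t₀) ^ 2) t₀ :=
      (hq t₀ ht₀T).hasDerivAt (Icc_mem_nhds ht₀0 (lt_of_le_of_lt ht₀.2 hT'T))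
    have hexp : HasDerivAt (fun s : ℝ => Real.exp (-M * s))
        (Real.exp (-M * t₀) * (-M)) t₀ := by
      have h1 : HasDerivAt (fun s : ℝ => -M * s) (-M) t₀ := by
        simpa using (hasDerivAt_id t₀).const_mul (-M)
      exact h1.exp
    have haff : HasDerivAt (fun s : ℝ => ε * (1 + s)) (ε * (0 + 1)) t₀ :=
      ((hasDerivAt_const t₀ (1 : ℝ)).add (hasDerivAt_id t₀)).const_mul ε
    set D : ℝ := (A - -(q t₀) ^ 2) * Real.exp (-M * t₀)
        + (p x₀ t₀ - q t₀) * (Real.exp (-M * t₀) * (-M)) + ε * (0 + 1) with hDdef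
    have hft : HasDerivAt (fun s => W (x₀, s)) D t₀ := by
      have h1 : HasDerivAt (fun s => (p x₀ s - q s) * Real.exp (-M * s))
          ((A - -(q t₀) ^ 2) * Real.exp (-M * t₀)
            + (p x₀ t₀ - q t₀) * (Real.exp (-M * t₀) * (-M))) t₀ :=
        (hpd.sub hqd).mul hexp
      exact h1.add haff
    -- Fermat at (one-sided) interior time
    have hD_le : D ≤ 0 := by
      have hminft : IsLocalMinOn (fun s => W (x₀, s)) (Icc 0 T') t₀ := by
        have hev3 : ∀ᶠ s in 𝓝[Icc (0 : ℝ) T'] t₀, W (x₀, t₀) ≤ W (x₀, s) := by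
          filter_upwards [self_mem_nhdsWithin] with s hs
          exact isMinOn_iff.1 hz₀min (x₀, s) ⟨hx₀, hs⟩
        exact hev3
      have hTC : -t₀ ∈ posTangentConeAt (Icc (0 : ℝ) T') t₀ := by
        have hseg : segment ℝ t₀ 0 ⊆ Icc (0 : ℝ) T' := by
          rw [segment_symm, segment_eq_Icc ht₀0.le]
          exact Icc_subset_Icc_right ht₀.2
        have := sub_mem_posTangentConeAt_of_segment_subset hseg
        simpa using this
      have h1 := hminft.hasFDerivWithinAt_nonneg hft.hasDerivWithinAt hTC
      have h2 : (0 : ℝ) ≤ -t₀ * D := by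
        simpa only [ContinuousLinearMap.smulRight_apply, ContinuousLinearMap.one_apply,
          ContinuousLinearMap.toSpanSingleton_apply, smul_eq_mul] using h1
      by_contra hDpos
      push_neg at hDpos
      nlinarith only [h2, mul_pos ht₀0 hDpos]
    -- final contradiction
    have hεpos : (0 : ℝ) < ε := hε
    have hk1 : 0 ≤ (Q₀ - P₀) * (P₀ + Q₀ + M) :=
      mul_nonneg (by linarith only [hplt]) hpqM
    have hD_ge : ε ≤ D := by
      have hDeq : D = (A + Q₀ ^ 2) * Ex - M * (P₀ - Q₀) * Ex + ε := by
        rw [hDdef, hP₀def, hQ₀def, hExdef]; ring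
      have h7 : (Q₀ - P₀) * (P₀ + Q₀ + M) * Ex ≤ (A + Q₀ ^ 2 - M * (P₀ - Q₀)) * Ex := by
        apply mul_le_mul_of_nonneg_right _ hExpos.le
        nlinarith only [hA_lb]
      nlinarith only [hDeq, h7, mul_nonneg hk1 hExpos.le]
    linarith only [hD_le, hD_ge, hε]
  -- ### conclusion
  intro x hx t ht
  have hIco : ∀ t' ∈ Ico (0 : ℝ) T, q t' ≤ p x t' := by
    intro t' ht'
    set T' : ℝ := (t' + T) / 2 with hT'def
    have hT'0 : 0 < T' := by
      simp only [hT'def]; linarith [ht'.1, hT]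
    have hT'T : T' < T := by simp only [hT'def]; linarith [ht'.2]
    have ht'mem : t' ∈ Icc (0 : ℝ) T' := ⟨ht'.1, by simp only [hT'def]; linarith [ht'.2]⟩
    have hall : ∀ ε, 0 < ε → 0 < (p x t' - q t') * Real.exp (-M * t') + ε * (1 + t') :=
      fun ε hε => key T' hT'0 hT'T ε hε x hx t' ht'mem
    by_contra hcon
    push_neg at hcon
    have hd : (p x t' - q t') * Real.exp (-M * t') < 0 :=
      mul_neg_of_neg_of_pos (by linarith) (Real.exp_pos _)
    set a : ℝ := (p x t' - q t') * Real.exp (-M * t') with hadef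
    have h1t : 0 < 1 + t' := by linarith [ht'.1]
    have hεc : 0 < -a / (2 * (1 + t')) := div_pos (by linarith) (by linarith)
    have hkey := hall (-a / (2 * (1 + t'))) hεc
    have h2 : -a / (2 * (1 + t')) * (1 + t') = -a / 2 := by
      field_simp
    rw [h2] at hkey
    linarith
  rcases eq_or_lt_of_le ht.2 with hTeq | hlt
  · -- t = T : pass to the limit
    haveI hne : (𝓝[Ico (0 : ℝ) T] T).NeBot := by
      rw [← mem_closure_iff_nhdsWithin_neBot, closure_Ico (ne_of_lt hT)]
      exact ⟨hT.le, le_refl T⟩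
    have hqc : Tendsto q (𝓝[Ico (0 : ℝ) T] T) (𝓝 (q T)) :=
      ((hqcont T (right_mem_Icc.2 hT.le)).mono Ico_subset_Icc_self).tendsto
    have hpc : Tendsto (fun s => p x s) (𝓝[Ico (0 : ℝ) T] T) (𝓝 (p x T)) := by
      have h1 : ContinuousOn (fun s => p x s) (Icc 0 T) := by
        have : ContinuousOn (fun s : ℝ => ((x : Plane), s)) (Icc 0 T) :=
          (continuous_const.prodMk continuous_id).continuousOn
        exact hPcont.comp this (fun s hs => ⟨hx, hs⟩)
      exact ((h1 T (right_mem_Icc.2 hT.le)).mono Ico_subset_Icc_self).tendsto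
    have hev : ∀ᶠ s in 𝓝[Ico (0 : ℝ) T] T, q s ≤ p x s := by
      filter_upwards [self_mem_nhdsWithin] with s hs
      exact hIco s hs
    have hfin := le_of_tendsto_of_tendsto hqc hpc hev
    rw [hTeq]
    exact hfin
  · exact hIco t ⟨ht.1, hlt⟩
end

section
/- Let K₀ > 0 and let u₀ ∈ C^∞(ℝ²) satisfy −Δu₀(x) ≤ K₀ e^{2u₀(x)} for all x ∈ ℝ² (i.e. the conformal metric e^{2u₀}δ_{ij} has Gauss curvature K[u₀] ≤ K₀). If ∫_{ℝ²} e^{2u₀(x)} dx < ∞, then ∫_{ℝ²} e^{2u₀(x)} dx ≥ 2π/K₀; that is, a smooth conformal metric on ℝ² of finite total area with Gauss curvature bounded above by K₀ has area at least 2π/K₀. -/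
open Real MeasureTheory Metric Set Filter Topology ENNReal

noncomputable def E₀ : Plane := EuclideanSpace.single 0 1
noncomputable def E₁ : Plane := EuclideanSpace.single 1 1

/-- unit radial vector -/
noncomputable def rad (θ : ℝ) : Plane := cos θ • E₀ + sin θ • E₁
/-- unit tangential vector -/
noncomputable def tang (θ : ℝ) : Plane := (-sin θ) • E₀ + cos θ • E₁
/-- the point with polar coordinates (r, θ) -/
noncomputable def pt (r θ : ℝ) : Plane := r • rad θ

lemma pt_def (r θ : ℝ) : pt r θ = (r * cos θ) • E₀ + (r * sin θ) • E₁ := by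
  simp [pt, rad, smul_add, smul_smul]

lemma continuous_rad : Continuous rad := by
  unfold rad; fun_prop

lemma continuous_tang : Continuous tang := by
  unfold tang; fun_prop

lemma continuous_pt : Continuous fun p : ℝ × ℝ => pt p.1 p.2 := by
  unfold pt; exact continuous_fst.smul (continuous_rad.comp continuous_snd)

lemma hasDerivAt_pt_r (r θ : ℝ) : HasDerivAt (fun s => pt s θ) (rad θ) r := by
  simpa [pt] using (hasDerivAt_id r).smul_const (rad θ)

lemma hasDerivAt_rad (θ : ℝ) : HasDerivAt rad (tang θ) θ := by
  unfold rad tang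
  exact ((Real.hasDerivAt_cos θ).smul_const E₀).add ((Real.hasDerivAt_sin θ).smul_const E₁)

lemma hasDerivAt_tang (θ : ℝ) : HasDerivAt tang (-rad θ) θ := by
  have : HasDerivAt tang ((-cos θ) • E₀ + (-sin θ) • E₁) θ := by
    unfold tang
    exact (((Real.hasDerivAt_sin θ).neg).smul_const E₀).add
      ((Real.hasDerivAt_cos θ).smul_const E₁)
  convert this using 1
  simp [rad, neg_add, neg_smul]
  abel

lemma hasDerivAt_pt_theta (r θ : ℝ) : HasDerivAt (fun t => pt r t) (r • tang θ) θ := by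
  unfold pt
  exact (hasDerivAt_rad θ).const_smul r

lemma rad_apply (θ : ℝ) : rad θ 0 = cos θ ∧ rad θ 1 = sin θ := by
  constructor <;>
  simp [rad, E₀, E₁, EuclideanSpace.single_apply, PiLp.add_apply, PiLp.smul_apply]

lemma norm_rad (θ : ℝ) : ‖rad θ‖ = 1 := by
  rw [EuclideanSpace.norm_eq]
  rw [Fin.sum_univ_two, (rad_apply θ).1, (rad_apply θ).2]
  rw [show ‖cos θ‖ ^ 2 + ‖sin θ‖ ^ 2 = 1 by
    rw [Real.norm_eq_abs, Real.norm_eq_abs, sq_abs, sq_abs, cos_sq_add_sin_sq]]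
  exact Real.sqrt_one

lemma pt_periodic (r : ℝ) : pt r π = pt r (-π) := by
  simp [pt_def]

lemma tang_periodic : tang π = tang (-π) := by
  simp [tang]

section U
variable (u : Plane → ℝ)

noncomputable def D1 : Plane → (Plane →L[ℝ] ℝ) := fderiv ℝ u
noncomputable def D2 : Plane → (Plane →L[ℝ] (Plane →L[ℝ] ℝ)) := fderiv ℝ (fderiv ℝ u)

lemma cont_D1 (hu : ContDiff ℝ (⊤ : ℕ∞) u) : Continuous (D1 u) := (hu.continuous_fderiv (by simp))

lemma cont_D2 (hu : ContDiff ℝ (⊤ : ℕ∞) u) : Continuous (D2 u) :=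
  ((hu.fderiv_right (m := (⊤ : ℕ∞)) (by simp)).continuous_fderiv (by simp))

lemma hasFDerivAt_u (hu : ContDiff ℝ (⊤ : ℕ∞) u) (x : Plane) : HasFDerivAt u (D1 u x) x :=
  (hu.differentiable (by simp) x).hasFDerivAt

lemma hasFDerivAt_D1 (hu : ContDiff ℝ (⊤ : ℕ∞) u) (x : Plane) : HasFDerivAt (D1 u) (D2 u x) x :=
  (((hu.fderiv_right (m := (⊤ : ℕ∞)) (by simp)).differentiable (by simp)) x).hasFDerivAt

lemma laplacian_eq (x : Plane) :
    laplacian u x = D2 u x E₀ E₀ + D2 u x E₁ E₁ := by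
  unfold laplacian
  rw [Fin.sum_univ_two, iteratedFDeriv_two_apply, iteratedFDeriv_two_apply]
  rfl

/-- rotation invariance of the trace of the Hessian -/
lemma trace_rot (x : Plane) (θ : ℝ) :
    D2 u x (rad θ) (rad θ) + D2 u x (tang θ) (tang θ) = D2 u x E₀ E₀ + D2 u x E₁ E₁ := by
  simp only [rad, tang, map_add, _root_.map_smul, ContinuousLinearMap.add_apply,
    ContinuousLinearMap.smul_apply, smul_eq_mul]
  linear_combination (((D2 u x) E₀) E₀ + ((D2 u x) E₁) E₁) * sin_sq_add_cos_sq θ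

/-- `F_r`, the radial derivative of `F(r,θ) = u(pt r θ)` -/
noncomputable def Fr (r θ : ℝ) : ℝ := D1 u (pt r θ) (rad θ)

lemma continuous_Fr (hu : ContDiff ℝ (⊤ : ℕ∞) u) : Continuous fun p : ℝ × ℝ => Fr u p.1 p.2 :=
  Continuous.clm_apply ((cont_D1 u hu).comp continuous_pt)
    (continuous_rad.comp continuous_snd)

lemma hasDerivAt_F_r (hu : ContDiff ℝ (⊤ : ℕ∞) u) (r θ : ℝ) : HasDerivAt (fun s => u (pt s θ)) (Fr u r θ) r :=
  (hasFDerivAt_u u hu (pt r θ)).comp_hasDerivAt r (hasDerivAt_pt_r r θ)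

/-- integrand of `h`: `G(r,θ) = (Du)(pt r θ)(pt r θ) = r F_r` -/
noncomputable def Gh (r θ : ℝ) : ℝ := D1 u (pt r θ) (pt r θ)

lemma Gh_eq (r θ : ℝ) : Gh u r θ = r * Fr u r θ := by
  simp only [Gh, Fr, pt, _root_.map_smul, smul_eq_mul]

lemma continuous_Gh (hu : ContDiff ℝ (⊤ : ℕ∞) u) : Continuous fun p : ℝ × ℝ => Gh u p.1 p.2 :=
  Continuous.clm_apply ((cont_D1 u hu).comp continuous_pt) continuous_pt

/-- derivative of `Gh` in `r`  -/
noncomputable def Gh' (r θ : ℝ) : ℝ :=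
  D2 u (pt r θ) (rad θ) (pt r θ) + D1 u (pt r θ) (rad θ)

lemma continuous_Gh' (hu : ContDiff ℝ (⊤ : ℕ∞) u) : Continuous fun p : ℝ × ℝ => Gh' u p.1 p.2 := by
  apply Continuous.add
  · exact Continuous.clm_apply
      (Continuous.clm_apply ((cont_D2 u hu).comp continuous_pt)
        (continuous_rad.comp continuous_snd)) continuous_pt
  · exact continuous_Fr u hu

lemma hasDerivAt_Gh (hu : ContDiff ℝ (⊤ : ℕ∞) u) (r θ : ℝ) : HasDerivAt (fun s => Gh u s θ) (Gh' u r θ) r := by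
  have hL : HasDerivAt (fun s => D1 u (pt s θ)) (D2 u (pt r θ) (rad θ)) r :=
    (hasFDerivAt_D1 u hu (pt r θ)).comp_hasDerivAt r (hasDerivAt_pt_r r θ)
  exact hL.clm_apply (hasDerivAt_pt_r r θ)

/-- `F_θ` -/
noncomputable def Ft (r θ : ℝ) : ℝ := D1 u (pt r θ) (r • tang θ)

/-- `F_θθ` -/
noncomputable def Ftt (r θ : ℝ) : ℝ :=
  D2 u (pt r θ) (r • tang θ) (r • tang θ) + D1 u (pt r θ) (-(r • rad θ))

lemma continuous_Ftt (hu : ContDiff ℝ (⊤ : ℕ∞) u) : Continuous fun p : ℝ × ℝ => Ftt u p.1 p.2 := by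
  have h1 : Continuous fun p : ℝ × ℝ => p.1 • tang p.2 :=
    continuous_fst.smul (continuous_tang.comp continuous_snd)
  apply Continuous.add
  · exact Continuous.clm_apply
      (Continuous.clm_apply ((cont_D2 u hu).comp continuous_pt) h1) h1
  · exact Continuous.clm_apply ((cont_D1 u hu).comp continuous_pt)
      ((continuous_fst.smul (continuous_rad.comp continuous_snd)).neg)

lemma hasDerivAt_Ft (hu : ContDiff ℝ (⊤ : ℕ∞) u) (r θ : ℝ) : HasDerivAt (fun t => Ft u r t) (Ftt u r θ) θ := by
  have hL : HasDerivAt (fun t => D1 u (pt r t)) (D2 u (pt r θ) (r • tang θ)) θ := by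
    have := (hasFDerivAt_D1 u hu (pt r θ)).comp_hasDerivAt θ (hasDerivAt_pt_theta r θ)
    exact this
  have hv : HasDerivAt (fun t => r • tang t) (-(r • rad θ)) θ := by
    have := (hasDerivAt_tang θ).const_smul r
    rw [smul_neg] at this; exact this
  exact hL.clm_apply hv

/-- the key polar Laplacian identity: `r·Gh' = r²·Δu - F_θθ` -/
lemma polar_identity (r θ : ℝ) :
    r * Gh' u r θ = r ^ 2 * laplacian u (pt r θ) - Ftt u r θ := by
  rw [laplacian_eq u, ← trace_rot u (pt r θ) θ]
  unfold Gh' Ftt pt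
  simp only [_root_.map_smul, map_neg, ContinuousLinearMap.smul_apply,
    ContinuousLinearMap.neg_apply, smul_eq_mul]
  ring

end U

/-- Differentiation under the integral sign, for jointly continuous data. -/
lemma hasDerivAt_param (G G' : ℝ → ℝ → ℝ)
    (hG : Continuous fun p : ℝ × ℝ => G p.1 p.2)
    (hG' : Continuous fun p : ℝ × ℝ => G' p.1 p.2)
    (hd : ∀ r θ, HasDerivAt (fun s => G s θ) (G' r θ) r) (r₀ : ℝ) :
    HasDerivAt (fun r => ∫ θ in (-π)..π, G r θ) (∫ θ in (-π)..π, G' r₀ θ) r₀ := by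
  have hπ : -π ≤ π := by linarith [pi_pos]
  set K : Set (ℝ × ℝ) := Icc (r₀ - 1) (r₀ + 1) ×ˢ Icc (-π) π with hK
  have hKc : IsCompact K := isCompact_Icc.prod isCompact_Icc
  obtain ⟨C, hC⟩ := hKc.exists_bound_of_continuousOn hG'.continuousOn
  refine (intervalIntegral.hasDerivAt_integral_of_dominated_loc_of_deriv_le
    (F := fun x θ => G x θ) (F' := fun x θ => G' x θ) (bound := fun _ => C)
    (ball_mem_nhds r₀ one_pos) ?_ ?_ ?_ ?_ ?_ ?_).2
  · exact Eventually.of_forall fun x =>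
      ((hG.comp (continuous_const.prodMk continuous_id)).aestronglyMeasurable).restrict
  · exact (hG.comp (continuous_const.prodMk continuous_id)).intervalIntegrable _ _
  · exact ((hG'.comp (continuous_const.prodMk continuous_id)).aestronglyMeasurable).restrict
  · refine Eventually.of_forall fun t ht x hx => ?_
    have ht' : t ∈ Icc (-π) π := by
      rw [uIoc_of_le hπ] at ht; exact Ioc_subset_Icc_self ht
    have hx' : x ∈ Icc (r₀ - 1) (r₀ + 1) := by
      rw [Real.ball_eq_Ioo] at hx; exact Ioo_subset_Icc_self hx
    exact hC (x, t) ⟨hx', ht'⟩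
  · exact intervalIntegrable_const
  · exact Eventually.of_forall fun t _ x _ => hd x t

section U2
variable (u : Plane → ℝ)

noncomputable def hh (r : ℝ) : ℝ := ∫ θ in (-π)..π, Gh u r θ
noncomputable def psi (r : ℝ) : ℝ := ∫ θ in (-π)..π, u (pt r θ)
noncomputable def gg (r : ℝ) : ℝ := ∫ θ in (-π)..π, r * Real.exp (2 * u (pt r θ))

lemma continuous_exp_pt (hu : ContDiff ℝ (⊤ : ℕ∞) u) :
    Continuous fun p : ℝ × ℝ => Real.exp (2 * u (pt p.1 p.2)) := by
  exact Real.continuous_exp.comp (continuous_const.mul (hu.continuous.comp continuous_pt))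

lemma continuous_gg (hu : ContDiff ℝ (⊤ : ℕ∞) u) : Continuous (gg u) := by
  apply intervalIntegral.continuous_parametric_intervalIntegral_of_continuous'
  exact continuous_fst.mul ((continuous_exp_pt u hu).comp
    (continuous_fst.prodMk continuous_snd))

lemma continuous_lap_pt (hu : ContDiff ℝ (⊤ : ℕ∞) u) :
    Continuous fun p : ℝ × ℝ => laplacian u (pt p.1 p.2) := by
  have : (fun p : ℝ × ℝ => laplacian u (pt p.1 p.2)) =
      fun p : ℝ × ℝ => D2 u (pt p.1 p.2) E₀ E₀ + D2 u (pt p.1 p.2) E₁ E₁ := by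
    funext p; exact laplacian_eq u (pt p.1 p.2)
  rw [this]
  have h2 := (cont_D2 u hu).comp continuous_pt
  exact (Continuous.clm_apply (Continuous.clm_apply h2 continuous_const)
    continuous_const).add (Continuous.clm_apply (Continuous.clm_apply h2 continuous_const)
    continuous_const)

lemma hasDerivAt_hh (hu : ContDiff ℝ (⊤ : ℕ∞) u) (r : ℝ) :
    HasDerivAt (hh u) (∫ θ in (-π)..π, Gh' u r θ) r :=
  hasDerivAt_param _ _ (continuous_Gh u hu) (continuous_Gh' u hu)
    (fun r θ => hasDerivAt_Gh u hu r θ) r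

lemma intFtt_zero (hu : ContDiff ℝ (⊤ : ℕ∞) u) (r : ℝ) :
    (∫ θ in (-π)..π, Ftt u r θ) = 0 := by
  have hFTC := intervalIntegral.integral_eq_sub_of_hasDerivAt
    (f := fun t => Ft u r t) (f' := fun t => Ftt u r t) (a := -π) (b := π)
    (fun t _ => hasDerivAt_Ft u hu r t)
    (((continuous_Ftt u hu).comp (continuous_const.prodMk continuous_id)).intervalIntegrable
      (-π) π)
  rw [hFTC]
  show D1 u (pt r π) (r • tang π) - D1 u (pt r (-π)) (r • tang (-π)) = 0
  rw [pt_periodic, tang_periodic, sub_self]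

set_option maxHeartbeats 1000000 in
lemma int_Gh'_eq (hu : ContDiff ℝ (⊤ : ℕ∞) u) {r : ℝ} (hr : r ≠ 0) :
    (∫ θ in (-π)..π, Gh' u r θ) = r * ∫ θ in (-π)..π, laplacian u (pt r θ) := by
  have hptc : Continuous fun θ => pt r θ := by
    unfold pt; exact continuous_rad.const_smul r
  have hlapc : Continuous fun θ => laplacian u (pt r θ) := by
    have heq : (fun θ => laplacian u (pt r θ)) =
        fun θ => D2 u (pt r θ) E₀ E₀ + D2 u (pt r θ) E₁ E₁ :=
      funext fun θ => laplacian_eq u (pt r θ)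
    rw [heq]
    have h2 := (cont_D2 u hu).comp hptc
    exact (Continuous.clm_apply (Continuous.clm_apply h2 continuous_const)
      continuous_const).add (Continuous.clm_apply (Continuous.clm_apply h2 continuous_const)
      continuous_const)
  have e1 : (∫ θ in (-π)..π, r * Gh' u r θ) = r * ∫ θ in (-π)..π, Gh' u r θ :=
    intervalIntegral.integral_const_mul _ _
  have h1 : r * ∫ θ in (-π)..π, Gh' u r θ
      = ∫ θ in (-π)..π, (r ^ 2 * laplacian u (pt r θ) - Ftt u r θ) := by
    rw [← e1]
    apply intervalIntegral.integral_congr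
    intro θ _
    exact polar_identity u r θ
  have h2 : (∫ θ in (-π)..π, (r ^ 2 * laplacian u (pt r θ) - Ftt u r θ))
      = r ^ 2 * (∫ θ in (-π)..π, laplacian u (pt r θ)) - ∫ θ in (-π)..π, Ftt u r θ := by
    rw [intervalIntegral.integral_sub, intervalIntegral.integral_const_mul]
    · exact (continuous_const.mul hlapc).intervalIntegrable _ _
    · exact ((continuous_Ftt u hu).comp
        (continuous_const.prodMk continuous_id)).intervalIntegrable _ _
  have h3 := h1.trans (h2.trans (by rw [intFtt_zero u hu r, sub_zero]))
  apply mul_left_cancel₀ hr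
  rw [h3]; ring

lemma hasDerivAt_psi (hu : ContDiff ℝ (⊤ : ℕ∞) u) (r : ℝ) :
    HasDerivAt (psi u) (∫ θ in (-π)..π, Fr u r θ) r :=
  hasDerivAt_param _ _ (hu.continuous.comp continuous_pt) (continuous_Fr u hu)
    (fun r θ => hasDerivAt_F_r u hu r θ) r

lemma int_Fr_eq (hu : ContDiff ℝ (⊤ : ℕ∞) u) {r : ℝ} (hr : r ≠ 0) :
    (∫ θ in (-π)..π, Fr u r θ) = hh u r / r := by
  unfold hh
  have : (∫ θ in (-π)..π, Gh u r θ) = r * ∫ θ in (-π)..π, Fr u r θ := by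
    rw [← intervalIntegral.integral_const_mul]
    apply intervalIntegral.integral_congr
    intro θ _
    exact Gh_eq u r θ
  rw [this]
  field_simp

lemma gg_nonneg (r : ℝ) (hr : 0 ≤ r) : 0 ≤ gg u r := by
  apply intervalIntegral.integral_nonneg (by linarith [pi_pos])
  intro θ _
  positivity

/-- the curvature bound gives the key differential inequality for `hh`. -/
lemma int_Gh'_ge (hu : ContDiff ℝ (⊤ : ℕ∞) u) {K₀ : ℝ}
    (hK : ∀ x : Plane, -laplacian u x ≤ K₀ * Real.exp (2 * u x)) {r : ℝ} (hr : 0 < r) :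
    -(K₀ * gg u r) ≤ ∫ θ in (-π)..π, Gh' u r θ := by
  rw [int_Gh'_eq u hu hr.ne']
  have hπ : -π ≤ π := by linarith [pi_pos]
  have hmono : (∫ θ in (-π)..π, -(K₀ * Real.exp (2 * u (pt r θ))))
      ≤ ∫ θ in (-π)..π, laplacian u (pt r θ) := by
    apply intervalIntegral.integral_mono_on hπ
    · exact ((continuous_const.mul ((continuous_exp_pt u hu).comp
        (continuous_const.prodMk continuous_id))).neg).intervalIntegrable _ _
    · exact ((continuous_lap_pt u hu).comp
        (continuous_const.prodMk continuous_id)).intervalIntegrable _ _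
    · intro θ _
      have := hK (pt r θ)
      linarith
  have h2 : (∫ θ in (-π)..π, -(K₀ * Real.exp (2 * u (pt r θ))))
      = -(K₀ * (gg u r / r)) := by
    rw [intervalIntegral.integral_neg, intervalIntegral.integral_const_mul]
    have : gg u r = r * ∫ θ in (-π)..π, Real.exp (2 * u (pt r θ)) := by
      unfold gg; rw [← intervalIntegral.integral_const_mul]
    rw [this]
    field_simp
  calc -(K₀ * gg u r) = r * -(K₀ * (gg u r / r)) := by field_simp
    _ ≤ r * ∫ θ in (-π)..π, laplacian u (pt r θ) := by
        rw [← h2]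
        exact mul_le_mul_of_nonneg_left hmono hr.le

end U2

/-- measurable equiv `ℝ × ℝ ≃ Plane` -/
noncomputable def Teq : (ℝ × ℝ) ≃ᵐ Plane :=
  (MeasurableEquiv.finTwoArrow (α := ℝ)).symm.trans
    (MeasurableEquiv.toLp 2 (Fin 2 → ℝ))

lemma Teq_measurePreserving : MeasurePreserving Teq volume volume :=
  ((EuclideanSpace.volume_preserving_symm_measurableEquiv_toLp (Fin 2)).symm).comp
    ((volume_preserving_finTwoArrow ℝ).symm)

lemma Teq_apply (a b : ℝ) : Teq (a, b) = a • E₀ + b • E₁ := by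
  apply PiLp.ext
  intro i
  have : (Teq (a, b) : EuclideanSpace ℝ (Fin 2)) i
      = (MeasurableEquiv.finTwoArrow (α := ℝ)).symm (a, b) i := rfl
  rw [this]
  fin_cases i <;>
    simp [MeasurableEquiv.finTwoArrow, E₀, E₁, EuclideanSpace.single_apply,
      PiLp.add_apply, PiLp.smul_apply, MeasurableEquiv.piFinTwo_symm_apply]

lemma Teq_polar (r θ : ℝ) : Teq (polarCoord.symm (r, θ)) = pt r θ := by
  have : polarCoord.symm (r, θ) = (r * cos θ, r * sin θ) := rfl
  rw [this, Teq_apply, pt_def]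

lemma area_polar (u : Plane → ℝ) (hint : Integrable fun x : Plane => Real.exp (2 * u x))
    {r0 r1 : ℝ} (h0 : 0 ≤ r0) (h01 : r0 ≤ r1) :
    (∫ r in r0..r1, gg u r) ≤ ∫ x : Plane, Real.exp (2 * u x) := by
  have hπ : -π < π := by linarith [pi_pos]
  set g : ℝ × ℝ → ℝ := fun q => Real.exp (2 * u (Teq q)) with hg
  have hgint : Integrable g := by
    rw [show g = (fun x : Plane => Real.exp (2 * u x)) ∘ Teq from rfl]
    exact (Teq_measurePreserving.integrable_comp_emb Teq.measurableEmbedding).2 hint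
  set B : ℝ × ℝ → (ℝ × ℝ) →L[ℝ] (ℝ × ℝ) := fun p =>
    LinearMap.toContinuousLinearMap (Matrix.toLin (Module.Basis.finTwoProd ℝ) (Module.Basis.finTwoProd ℝ)
      !![cos p.2, -p.1 * sin p.2; sin p.2, p.1 * cos p.2]) with hB
  have B_det : ∀ p, (B p).det = p.1 := by
    intro p
    conv_rhs => rw [← one_mul p.1, ← cos_sq_add_sin_sq p.2]
    simp only [hB, neg_mul, LinearMap.det_toContinuousLinearMap, LinearMap.det_toLin,
      Matrix.det_fin_two_of, sub_neg_eq_add]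
    ring
  have htm : MeasurableSet polarCoord.target := polarCoord.open_target.measurableSet
  -- integrability on the target
  have hInt_target : IntegrableOn (fun p : ℝ × ℝ => p.1 • g (polarCoord.symm p))
      polarCoord.target := by
    have himg : polarCoord.symm '' polarCoord.target = polarCoord.source := by
      rw [← polarCoord.symm_source]
      exact polarCoord.symm.image_source_eq_target
    have h1 : IntegrableOn g (polarCoord.symm '' polarCoord.target) := by
      rw [himg]; exact hgint.integrableOn
    have h2 := (integrableOn_image_iff_integrableOn_abs_det_fderiv_smul (μ := volume)
      htm (fun p _ => (hasFDerivAt_polarCoord_symm p).hasFDerivWithinAt)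
      (polarCoord.symm.injOn) g).1 h1
    apply h2.congr_fun _ htm
    intro p hp
    show |(B p).det| • g (polarCoord.symm p) = p.1 • g (polarCoord.symm p)
    rw [B_det, abs_of_pos hp.1]
  -- the area in polar coordinates
  have hA : (∫ p in polarCoord.target, p.1 • g (polarCoord.symm p))
      = ∫ x : Plane, Real.exp (2 * u x) := by
    rw [integral_comp_polarCoord_symm g]
    exact Teq_measurePreserving.integral_comp' (fun x : Plane => Real.exp (2 * u x))
  set S : Set (ℝ × ℝ) := Ioo r0 r1 ×ˢ Ioo (-π) π with hS
  have hsub : S ⊆ polarCoord.target := by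
    rintro ⟨r, θ⟩ ⟨hr, hθ⟩
    exact ⟨lt_of_le_of_lt h0 hr.1, hθ⟩
  have hmono : (∫ p in S, p.1 • g (polarCoord.symm p))
      ≤ ∫ p in polarCoord.target, p.1 • g (polarCoord.symm p) := by
    apply setIntegral_mono_set hInt_target
    · filter_upwards [ae_restrict_mem htm] with p hp
      have : (0:ℝ) < p.1 := hp.1
      simp only [smul_eq_mul]
      positivity
    · exact HasSubset.Subset.eventuallyLE hsub
  -- Fubini on S
  have hS_int : IntegrableOn (fun p : ℝ × ℝ => p.1 • g (polarCoord.symm p)) S :=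
    hInt_target.mono_set hsub
  have hfub : (∫ p in S, p.1 • g (polarCoord.symm p))
      = ∫ r in Ioo r0 r1, ∫ θ in Ioo (-π) π, (r, θ).1 • g (polarCoord.symm (r, θ)) := by
    rw [hS, Measure.volume_eq_prod] at hS_int ⊢
    exact setIntegral_prod _ hS_int
  -- identify the inner integral with `gg`
  have hinner : ∀ r : ℝ, (∫ θ in Ioo (-π) π, (r, θ).1 • g (polarCoord.symm (r, θ))) = gg u r := by
    intro r
    have : ∀ θ : ℝ, (r, θ).1 • g (polarCoord.symm (r, θ)) = r * Real.exp (2 * u (pt r θ)) := by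
      intro θ
      simp only [smul_eq_mul, hg, Teq_polar]
    rw [setIntegral_congr_fun measurableSet_Ioo (fun θ _ => this θ)]
    unfold gg
    rw [intervalIntegral.integral_of_le hπ.le, integral_Ioc_eq_integral_Ioo]
  have houter : (∫ r in r0..r1, gg u r)
      = ∫ r in Ioo r0 r1, ∫ θ in Ioo (-π) π, (r, θ).1 • g (polarCoord.symm (r, θ)) := by
    rw [intervalIntegral.integral_of_le h01, integral_Ioc_eq_integral_Ioo]
    apply setIntegral_congr_fun measurableSet_Ioo
    intro r _
    exact (hinner r).symm
  rw [houter, ← hfub, ← hA]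
  exact hmono

lemma gg_eq (u : Plane → ℝ) (r : ℝ) :
    gg u r = r * ∫ θ in (-π)..π, Real.exp (2 * u (pt r θ)) := by
  unfold gg; rw [← intervalIntegral.integral_const_mul]

lemma jensen (u : Plane → ℝ) (hu : ContDiff ℝ (⊤ : ℕ∞) u) (r : ℝ) :
    (2 * π) * Real.exp (psi u r / π) ≤ ∫ θ in (-π)..π, Real.exp (2 * u (pt r θ)) := by
  have hπ : (0:ℝ) < π := pi_pos
  have hππ : -π ≤ π := by linarith
  set μ : Measure ℝ := volume.restrict (Ioc (-π) π) with hμ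
  have hμuniv : μ univ = ENNReal.ofReal (2 * π) := by
    rw [hμ, Measure.restrict_apply_univ, Real.volume_Ioc]
    norm_num
    ring_nf
    rw [ENNReal.ofReal_mul hπ.le]; simp
  haveI : IsFiniteMeasure μ := ⟨by rw [hμuniv]; exact ENNReal.ofReal_lt_top⟩
  haveI : NeZero μ := by
    refine ⟨fun h => ?_⟩
    rw [h] at hμuniv
    simp only [Measure.coe_zero, Pi.zero_apply] at hμuniv
    have : (0:ℝ) < 2 * π := by linarith
    rw [eq_comm, ENNReal.ofReal_eq_zero] at hμuniv
    linarith
  have hcontf : Continuous fun θ => 2 * u (pt r θ) := by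
    have hptc : Continuous fun θ => pt r θ := by
      unfold pt; exact continuous_rad.const_smul r
    exact continuous_const.mul (hu.continuous.comp hptc)
  have hfi : Integrable (fun θ => 2 * u (pt r θ)) μ :=
    (hcontf.integrableOn_Ioc)
  have hgi : Integrable (fun θ => Real.exp (2 * u (pt r θ))) μ :=
    ((Real.continuous_exp.comp hcontf).integrableOn_Ioc)
  have hJ := convexOn_exp.map_average_le Real.continuous_exp.continuousOn isClosed_univ
    (Eventually.of_forall fun x => mem_univ _) hfi hgi
  rw [average_eq, average_eq, measureReal_def, hμuniv] at hJ
  have htr : (ENNReal.ofReal (2 * π)).toReal = 2 * π := ENNReal.toReal_ofReal (by linarith)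
  rw [htr] at hJ
  have hI1 : (∫ θ, 2 * u (pt r θ) ∂μ) = 2 * psi u r := by
    rw [hμ, ← intervalIntegral.integral_of_le hππ]
    unfold psi
    rw [intervalIntegral.integral_const_mul]
  have hI2 : (∫ θ, Real.exp (2 * u (pt r θ)) ∂μ)
      = ∫ θ in (-π)..π, Real.exp (2 * u (pt r θ)) := by
    rw [hμ, ← intervalIntegral.integral_of_le hππ]
  rw [hI1, hI2] at hJ
  have harg : (2 * π)⁻¹ • (2 * psi u r) = psi u r / π := by
    field_simp
    rw [smul_eq_mul]; field_simp
  rw [harg] at hJ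
  have h2π : (0:ℝ) < 2 * π := by linarith
  calc (2 * π) * Real.exp (psi u r / π)
      ≤ (2 * π) * ((2 * π)⁻¹ • ∫ θ in (-π)..π, Real.exp (2 * u (pt r θ))) :=
        mul_le_mul_of_nonneg_left hJ h2π.le
    _ = ∫ θ in (-π)..π, Real.exp (2 * u (pt r θ)) := by
        rw [smul_eq_mul]
        field_simp

lemma hh_ge (u : Plane → ℝ) (hu : ContDiff ℝ (⊤ : ℕ∞) u) {K₀ : ℝ} (hK₀ : 0 ≤ K₀)
    (hK : ∀ x : Plane, -laplacian u x ≤ K₀ * Real.exp (2 * u x))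
    (hint : Integrable fun x : Plane => Real.exp (2 * u x))
    {r1 : ℝ} (hr1 : 0 < r1) :
    -(K₀ * ∫ x : Plane, Real.exp (2 * u x)) ≤ hh u r1 := by
  set A := ∫ x : Plane, Real.exp (2 * u x) with hA
  obtain ⟨M, hM⟩ := (isCompact_closedBall (0:Plane) 1).exists_bound_of_continuousOn
    (cont_D1 u hu).continuousOn
  have hMnn : 0 ≤ M := le_trans (norm_nonneg _) (hM 0 (mem_closedBall_self zero_le_one))
  have hπ : (0:ℝ) < π := pi_pos
  by_contra hlt
  push_neg at hlt
  set ε : ℝ := (-(K₀ * A) - hh u r1) / 2 with hε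
  have hεpos : 0 < ε := by simp only [hε]; linarith
  set r0 : ℝ := min r1 (min 1 (ε / (2 * π * (M + 1)))) with hr0
  have hr0pos : 0 < r0 := lt_min hr1 (lt_min one_pos (by positivity))
  have hr01 : r0 ≤ r1 := min_le_left _ _
  have hr0le1 : r0 ≤ 1 := le_trans (min_le_right _ _) (min_le_left _ _)
  have hr0leε : r0 ≤ ε / (2 * π * (M + 1)) := le_trans (min_le_right _ _) (min_le_right _ _)
  -- the auxiliary primitive
  set Φ : ℝ → ℝ := fun s => ∫ t in r0..s, gg u t with hΦ
  have hΦd : ∀ s : ℝ, HasDerivAt Φ (gg u s) s := fun s =>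
    intervalIntegral.integral_hasDerivAt_right ((continuous_gg u hu).intervalIntegrable _ _)
      ((continuous_gg u hu).stronglyMeasurableAtFilter _ _) (continuous_gg u hu).continuousAt
  have hd : ∀ s : ℝ, HasDerivAt (fun t => hh u t + K₀ * Φ t)
      ((∫ θ in (-π)..π, Gh' u s θ) + K₀ * gg u s) s := fun s =>
    (hasDerivAt_hh u hu s).add ((hΦd s).const_mul K₀)
  have hmono : MonotoneOn (fun t => hh u t + K₀ * Φ t) (Icc r0 r1) := by
    apply monotoneOn_of_deriv_nonneg (convex_Icc _ _)
    · exact fun s _ => ((hd s).continuousAt).continuousWithinAt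
    · exact fun s _ => ((hd s).differentiableAt).differentiableWithinAt
    · intro s hs
      rw [interior_Icc] at hs
      rw [(hd s).deriv]
      have hspos : 0 < s := lt_trans hr0pos hs.1
      have := int_Gh'_ge u hu hK hspos
      have hggnn : 0 ≤ gg u s := gg_nonneg u s hspos.le
      nlinarith
  have hmono' := hmono (left_mem_Icc.2 hr01) (right_mem_Icc.2 hr01) hr01
  simp only at hmono'
  have hΦ0 : Φ r0 = 0 := intervalIntegral.integral_same
  have hΦ1 : Φ r1 ≤ A := area_polar u hint hr0pos.le hr01
  -- bound |hh r0|
  have hhh0 : ‖hh u r0‖ ≤ M * r0 * (2 * π) := by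
    have hbd : ∀ θ ∈ Set.uIoc (-π) π, ‖Gh u r0 θ‖ ≤ M * r0 := by
      intro θ _
      have hnorm : ‖pt r0 θ‖ = r0 := by
        unfold pt
        rw [norm_smul, norm_rad, Real.norm_eq_abs, abs_of_pos hr0pos, mul_one]
      have hmem : pt r0 θ ∈ closedBall (0:Plane) 1 := by
        rw [mem_closedBall_zero_iff, hnorm]; exact hr0le1
      calc ‖Gh u r0 θ‖ = ‖D1 u (pt r0 θ) (pt r0 θ)‖ := rfl
        _ ≤ ‖D1 u (pt r0 θ)‖ * ‖pt r0 θ‖ := (D1 u (pt r0 θ)).le_opNorm _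
        _ ≤ M * r0 := by rw [hnorm]; exact mul_le_mul_of_nonneg_right (hM _ hmem) hr0pos.le
    have := intervalIntegral.norm_integral_le_of_norm_le_const hbd
    calc ‖hh u r0‖ ≤ (M * r0) * |π - (-π)| := this
      _ = M * r0 * (2 * π) := by rw [abs_of_pos (by linarith : (0:ℝ) < π - (-π))]; ring
  have hsmall : M * r0 * (2 * π) ≤ ε := by
    have h1 : M * r0 * (2 * π) ≤ M * (ε / (2 * π * (M + 1))) * (2 * π) := by
      apply mul_le_mul_of_nonneg_right _ (by positivity)
      exact mul_le_mul_of_nonneg_left hr0leε hMnn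
    have h2 : M * (ε / (2 * π * (M + 1))) * (2 * π) = ε * (M / (M + 1)) := by
      field_simp
    have h3 : ε * (M / (M + 1)) ≤ ε * 1 := by
      apply mul_le_mul_of_nonneg_left _ hεpos.le
      rw [div_le_one (by linarith)]
      linarith
    linarith
  have habs : -(M * r0 * (2 * π)) ≤ hh u r0 := by
    rw [Real.norm_eq_abs] at hhh0
    have := neg_abs_le (hh u r0)
    linarith
  have hKΦ : K₀ * Φ r1 ≤ K₀ * A := mul_le_mul_of_nonneg_left hΦ1 hK₀
  rw [hΦ0] at hmono'
  linarith

lemma psi_ge (u : Plane → ℝ) (hu : ContDiff ℝ (⊤ : ℕ∞) u) {K₀ : ℝ} (hK₀ : 0 ≤ K₀)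
    (hK : ∀ x : Plane, -laplacian u x ≤ K₀ * Real.exp (2 * u x))
    (hint : Integrable fun x : Plane => Real.exp (2 * u x))
    {r : ℝ} (hr : 1 ≤ r) :
    psi u 1 - (K₀ * ∫ x : Plane, Real.exp (2 * u x)) * Real.log r ≤ psi u r := by
  set A := ∫ x : Plane, Real.exp (2 * u x) with hA
  have hKA : 0 ≤ K₀ * A :=
    mul_nonneg hK₀ (integral_nonneg fun x => (Real.exp_pos _).le)
  have hd : ∀ s : ℝ, 0 < s → HasDerivAt (fun t => psi u t + (K₀ * A) * Real.log t)
      ((∫ θ in (-π)..π, Fr u s θ) + (K₀ * A) * s⁻¹) s := fun s hs =>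
    (hasDerivAt_psi u hu s).add ((Real.hasDerivAt_log hs.ne').const_mul (K₀ * A))
  have hmono : MonotoneOn (fun t => psi u t + (K₀ * A) * Real.log t) (Icc 1 r) := by
    apply monotoneOn_of_deriv_nonneg (convex_Icc _ _)
    · intro s hs
      have hs0 : (0:ℝ) < s := lt_of_lt_of_le one_pos hs.1
      exact ((hd s hs0).continuousAt).continuousWithinAt
    · intro s hs
      rw [interior_Icc] at hs
      have hs0 : (0:ℝ) < s := lt_trans one_pos hs.1
      exact ((hd s hs0).differentiableAt).differentiableWithinAt
    · intro s hs
      rw [interior_Icc] at hs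
      have hs0 : (0:ℝ) < s := lt_trans one_pos hs.1
      rw [(hd s hs0).deriv]
      rw [int_Fr_eq u hu hs0.ne']
      have h1 : -(K₀ * A) ≤ hh u s := hh_ge u hu hK₀ hK hint hs0
      have h2 : -(K₀ * A) / s ≤ hh u s / s := div_le_div_of_nonneg_right h1 hs0.le
      have h3 : -(K₀ * A) / s = -((K₀ * A) * s⁻¹) := by ring
      linarith [h3 ▸ h2]
  have := hmono (left_mem_Icc.2 hr) (right_mem_Icc.2 hr) hr
  simp only [Real.log_one, mul_zero, add_zero] at this
  linarith


/-- a smooth conformal metric `e^{2u₀}δ` on `ℝ²` of finite total area with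
Gauss curvature `K[u₀] ≤ K₀` (`K₀ > 0`) has total area at least `2π/K₀`. -/
theorem area_lower_bound_of_curvature_upper_bound (K₀ : ℝ) (hK₀pos : 0 < K₀)
    (u₀ : Plane → ℝ) (hu₀ : ContDiff ℝ (⊤ : ℕ∞) u₀)
    (hK₀ : ∀ x : Plane, -laplacian u₀ x ≤ K₀ * exp (2 * u₀ x))
    (hint : Integrable (fun x => exp (2 * u₀ x))) :
    2 * π / K₀ ≤ ∫ x : Plane, exp (2 * u₀ x) := by
  by_contra hcon
  push_neg at hcon
  set A := ∫ x : Plane, Real.exp (2 * u₀ x) with hA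
  have hπ : (0:ℝ) < π := pi_pos
  have hA0 : 0 ≤ A := integral_nonneg fun x => (Real.exp_pos _).le
  have haπ : K₀ * A < 2 * π := by
    have := (lt_div_iff₀ hK₀pos).1 hcon
    linarith
  set a : ℝ := K₀ * A with ha
  have ha0 : 0 ≤ a := mul_nonneg hK₀pos.le hA0
  set β : ℝ := 1 - a / π with hβ
  have hβ1 : -1 < β := by
    rw [hβ]
    have : a / π < 2 := by rw [div_lt_iff₀ hπ]; linarith
    linarith
  set p : ℝ := β + 1 with hp
  have hppos : 0 < p := by rw [hp]; linarith
  set C : ℝ := 2 * π * Real.exp (psi u₀ 1 / π) with hC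
  have hCpos : 0 < C := by positivity
  -- pointwise lower bound for gg on [1, ∞)
  have hgg_lb : ∀ r : ℝ, 1 ≤ r → C * r ^ β ≤ gg u₀ r := by
    intro r hr
    have hr0 : (0:ℝ) < r := lt_of_lt_of_le one_pos hr
    have hJ := jensen u₀ hu₀ r
    have hψ := psi_ge u₀ hu₀ hK₀pos.le hK₀ hint hr
    have step1 : r * ((2 * π) * Real.exp (psi u₀ r / π)) ≤ gg u₀ r := by
      rw [gg_eq]
      exact mul_le_mul_of_nonneg_left hJ hr0.le
    have step2 : C * r ^ β ≤ r * ((2 * π) * Real.exp (psi u₀ r / π)) := by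
      have hexp : Real.exp ((psi u₀ 1 - a * Real.log r) / π) ≤ Real.exp (psi u₀ r / π) :=
        Real.exp_le_exp.2 (div_le_div_of_nonneg_right hψ hπ.le)
      have hrpow : r ^ β = r * Real.exp (-(a / π) * Real.log r) := by
        rw [Real.rpow_def_of_pos hr0]
        rw [show Real.log r * β = Real.log r + (-(a / π) * Real.log r) by rw [hβ]; ring]
        rw [Real.exp_add, Real.exp_log hr0]
      have hCrβ : C * r ^ β = r * ((2 * π) * Real.exp ((psi u₀ 1 - a * Real.log r) / π)) := by
        rw [hrpow, hC]
        rw [show (psi u₀ 1 - a * Real.log r) / π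
            = psi u₀ 1 / π + (-(a / π) * Real.log r) by field_simp; ring]
        rw [Real.exp_add]
        ring
      rw [hCrβ]
      exact mul_le_mul_of_nonneg_left
        (mul_le_mul_of_nonneg_left hexp (by positivity)) hr0.le
    linarith
  -- choose R large enough
  set R : ℝ := (1 + p * (A + 1) / C) ^ (p⁻¹) with hR
  have hbase : (1:ℝ) ≤ 1 + p * (A + 1) / C := by
    have : 0 ≤ p * (A + 1) / C := by positivity
    linarith
  have hbasepos : (0:ℝ) < 1 + p * (A + 1) / C := by linarith
  have hR1 : (1:ℝ) ≤ R := by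
    rw [hR]
    calc (1:ℝ) = 1 ^ (p⁻¹) := (Real.one_rpow _).symm
      _ ≤ (1 + p * (A + 1) / C) ^ (p⁻¹) := by
          exact Real.rpow_le_rpow zero_le_one hbase (by positivity)
  have hRp : R ^ p = 1 + p * (A + 1) / C := by
    rw [hR, ← Real.rpow_mul hbasepos.le, inv_mul_cancel₀ hppos.ne', Real.rpow_one]
  -- compare integrals on [1, R]
  have hup : (∫ r in (1:ℝ)..R, gg u₀ r) ≤ A := area_polar u₀ hint zero_le_one hR1
  have hmono : (∫ r in (1:ℝ)..R, C * r ^ β) ≤ ∫ r in (1:ℝ)..R, gg u₀ r := by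
    apply intervalIntegral.integral_mono_on hR1
    · apply ContinuousOn.intervalIntegrable
      apply ContinuousOn.mul continuousOn_const
      apply ContinuousOn.rpow_const continuousOn_id
      intro x hx
      rw [uIcc_of_le hR1] at hx
      exact Or.inl (by linarith [hx.1] : x ≠ 0)
    · exact (continuous_gg u₀ hu₀).intervalIntegrable _ _
    · intro x hx
      exact hgg_lb x hx.1
  have hval : (∫ r in (1:ℝ)..R, C * r ^ β) = C * ((R ^ p - 1) / p) := by
    rw [intervalIntegral.integral_const_mul, integral_rpow (Or.inl hβ1)]
    rw [Real.one_rpow]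
  have hfinal : A + 1 ≤ A := by
    have h1 : C * ((R ^ p - 1) / p) ≤ A := by rw [← hval]; linarith
    rw [hRp] at h1
    have h2 : C * ((1 + p * (A + 1) / C - 1) / p) = A + 1 := by
      field_simp
      ring
    linarith [h2 ▸ h1]
  linarith
end
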